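/- arXiv:2412.02572 — 8 statements merged into one kernel-verified Lean document; each statement's English description precedes it below -/
import Mathlib

section
/- Let p = 2q be an even integer with q ≥ 1, and let (κ_s)_{s≥0}, (m_n)_{n≥0} be real sequences with m_0 = κ_0 = 1 satisfying, for every n ≥ 1, the recursion m_n = Σ_{s=1}^{n} κ_s · Σ_{(i_1,…,i_{sq}) ∈ ℕ^{sq}, i_1+…+i_{sq} = n−s} Π_{j=1}^{sq} m_{i_j}. Then in the ring of formal power series ℝ⟦X⟧, writing M(X) = Σ_{n≥0} m_n X^n and C(X) = Σ_{n≥0} κ_n X^n, one has M = C substituted at the power series X·M^q, i.e. M(X) = Σ_{s≥0} κ_s · (X·M(X)^q)^s (the substitution is well defined since X·M(X)^q has zero constant coefficient). -/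
open PowerSeries Finset

lemma coeff_pow_tuple (φ : ℝ⟦X⟧) : ∀ (k n : ℕ),
    PowerSeries.coeff (R := ℝ) n (φ ^ k) =
      ∑ i ∈ Finset.Nat.antidiagonalTuple k n, ∏ j, PowerSeries.coeff (R := ℝ) (i j) φ := by
  intro k
  induction k with
  | zero =>
    intro n
    cases n with
    | zero => simp [Finset.Nat.antidiagonalTuple_zero_zero]
    | succ n => simp [Finset.Nat.antidiagonalTuple_zero_succ]
  | succ k ih =>
    intro n
    rw [pow_succ', PowerSeries.coeff_mul]
    simp_rw [ih, Finset.mul_sum]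
    rw [Finset.sum_sigma']
    refine Finset.sum_nbij' (fun x => Fin.cons x.1.1 x.2)
      (fun f => ⟨(f 0, ∑ j, f (Fin.succ j)), Fin.tail f⟩) ?_ ?_ ?_ ?_ ?_
    · rintro ⟨⟨a, b⟩, g⟩ hx
      simp only [Finset.mem_sigma, Finset.HasAntidiagonal.mem_antidiagonal,
        Finset.Nat.mem_antidiagonalTuple] at hx ⊢
      rw [Fin.sum_cons, hx.2, hx.1]
    · intro f hf
      simp only [Finset.Nat.mem_antidiagonalTuple] at hf
      simp only [Finset.mem_sigma, Finset.HasAntidiagonal.mem_antidiagonal,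
        Finset.Nat.mem_antidiagonalTuple]
      refine ⟨?_, rfl⟩
      rw [← hf, Fin.sum_univ_succ]
    · rintro ⟨⟨a, b⟩, g⟩ hx
      simp only [Finset.mem_sigma, Finset.mem_antidiagonal,
        Finset.Nat.mem_antidiagonalTuple] at hx
      refine Sigma.ext ?_ ?_
      · simp [Fin.cons_zero, Fin.cons_succ, hx.2]
      · simp [Fin.tail_cons]
    · intro f hf
      exact Fin.cons_self_tail f
    · rintro ⟨⟨a, b⟩, g⟩ hx
      rw [Fin.prod_univ_succ]
      simp [Fin.cons_zero, Fin.cons_succ]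

/-- **Analytic moment–cumulant formula.** Let `p = 2q` be an even integer with `q ≥ 1`,
and let `κ`, `m` be real sequences with `m 0 = κ 0 = 1` satisfying the moment–cumulant
recursion. Then, writing `M = Σ m_n X^n` and `C = Σ κ_n X^n` in `ℝ⟦X⟧`,
one has `M = C` substituted at `X * M^q`, i.e. `M = Σ_{s≥0} κ_s (X * M^q)^s`
(coefficientwise; the sum is well defined since `X * M^q` has zero constant term). -/
theorem stmt0 (q : ℕ) (hq : 1 ≤ q) (κ m : ℕ → ℝ)
    (hm0 : m 0 = 1) (hκ0 : κ 0 = 1)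
    (hrec : ∀ n : ℕ, 1 ≤ n →
      m n = ∑ s ∈ Finset.Icc 1 n, κ s *
        ∑ i ∈ Finset.Nat.antidiagonalTuple (s * q) (n - s), ∏ j, m (i j)) :
    ∀ n : ℕ,
      (PowerSeries.coeff (R := ℝ) n) (PowerSeries.mk m) =
        ∑' s : ℕ, κ s *
          (PowerSeries.coeff (R := ℝ) n) ((PowerSeries.X * (PowerSeries.mk m) ^ q) ^ s) := by
  intro n
  have hco : ∀ s : ℕ, PowerSeries.coeff (R := ℝ) n ((PowerSeries.X * (PowerSeries.mk m) ^ q) ^ s) =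
      if s ≤ n then
        ∑ i ∈ Finset.Nat.antidiagonalTuple (s * q) (n - s), ∏ j, m (i j) else 0 := by
    intro s
    rw [mul_pow, ← pow_mul, mul_comm (PowerSeries.X ^ s), PowerSeries.coeff_mul_X_pow']
    split_ifs with h
    · rw [mul_comm q s, coeff_pow_tuple]
      simp only [coeff_mk]
    · rfl
  have hsupp : ∀ s ∉ Finset.range (n + 1),
      κ s * PowerSeries.coeff (R := ℝ) n ((PowerSeries.X * (PowerSeries.mk m) ^ q) ^ s) = 0 := by
    intro s hs
    rw [hco, if_neg (by simp at hs; omega), mul_zero]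
  rw [tsum_eq_sum hsupp]
  simp_rw [hco]
  rcases Nat.eq_zero_or_pos n with rfl | hn
  · simp [Finset.Nat.antidiagonalTuple_zero_right, hκ0, hm0]
  · have hins : Finset.range (n + 1) = insert 0 (Finset.Icc 1 n) := by
      ext x; simp; omega
    obtain ⟨k, rfl⟩ : ∃ k, n = k + 1 := ⟨n - 1, by omega⟩
    rw [hins, Finset.sum_insert (by simp)]
    have hemp : Finset.Nat.antidiagonalTuple (0 * q) (k + 1 - 0) = ∅ := by
      haveI : IsEmpty (Fin (0 * q)) := by rw [zero_mul]; infer_instance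
      apply Finset.eq_empty_of_forall_notMem
      intro x hx
      rw [Finset.Nat.mem_antidiagonalTuple] at hx
      simp at hx
    have h0 : (κ 0 * if 0 ≤ k + 1 then
        ∑ i ∈ Finset.Nat.antidiagonalTuple (0 * q) (k + 1 - 0), ∏ j, m (i j) else 0) = 0 := by
      rw [if_pos (by omega), hemp, Finset.sum_empty, mul_zero]
    rw [h0, zero_add, coeff_mk, hrec (k + 1) (by omega)]
    refine Finset.sum_congr rfl fun s hs => ?_
    simp only [Finset.mem_Icc] at hs
    rw [if_pos hs.2]
end

section
/- Let p ≥ 1 be an integer. If M ∈ ℝ⟦X⟧ is a formal power series satisfying M = 1 + X²·M^p, then for every k ≥ 0 the coefficient of X^{2k} in M equals the Fuss–Catalan number F_p(k) = (1/(pk+1))·(pk+1 choose k), and every odd-degree coefficient of M is zero. -/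
/-- The Fuss–Catalan number `F_p(k) = (1/(pk+1)) * (pk+1 choose k)`, as a real number. -/
noncomputable def fussCatalan (p k : ℕ) : ℝ :=
  (1 / (p * k + 1 : ℝ)) * (Nat.choose (p * k + 1) k : ℝ)

/-- Raney number `A_p(x,k) = C(x+kp,k) - p C(x+kp-1,k-1)`, equal to
`(x/(x+kp)) C(x+kp,k)` for `x ≥ 1`. -/
noncomputable def raneyA (p x : ℕ) : ℕ → ℝ
  | 0 => 1
  | (k+1) => ((x + (k+1)*p).choose (k+1) : ℝ) - p * ((x + (k+1)*p - 1).choose k : ℝ)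

lemma raneyA_zero (p x : ℕ) : raneyA p x 0 = 1 := rfl

lemma raneyA_succ (p x k : ℕ) :
    raneyA p x (k+1)
      = ((x + (k+1)*p).choose (k+1) : ℝ) - p * ((x + (k+1)*p - 1).choose k : ℝ) := rfl

/-- cast form of `Nat.succ_mul_choose_eq`. -/
lemma succ_mul_choose_cast (n k : ℕ) :
    ((n:ℝ)+1) * (n.choose k : ℝ) = ((n+1).choose (k+1) : ℝ) * ((k:ℝ)+1) := by
  have := Nat.add_one_mul_choose_eq n k
  exact_mod_cast congrArg (Nat.cast (R := ℝ)) this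

lemma raneyA_anchor (p : ℕ) (hp : 1 ≤ p) (k : ℕ) : raneyA p 0 (k+1) = 0 := by
  rw [raneyA_succ]
  obtain ⟨B, hB⟩ : ∃ B, (k+1)*p = B + 1 := ⟨(k+1)*p - 1, by
    have : 1 ≤ (k+1)*p := Nat.one_le_iff_ne_zero.2 (by positivity)
    omega⟩
  have h := succ_mul_choose_cast B k
  have hBp : ((k:ℝ)+1) * (p:ℝ) = (B:ℝ)+1 := by exact_mod_cast hB
  rw [← hBp] at h
  have hk : ((k:ℝ)+1) ≠ 0 := by positivity
  simp only [zero_add, hB]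
  have hB1 : B + 1 - 1 = B := by omega
  rw [hB1]
  have key : ((B+1).choose (k+1) : ℝ) = p * (B.choose k : ℝ) := by
    have h' : ((B+1).choose (k+1) : ℝ) * ((k:ℝ)+1) = (p * (B.choose k : ℝ)) * ((k:ℝ)+1) := by
      linear_combination -h
    exact mul_right_cancel₀ hk h'
  rw [key]; ring

/-- key recursion: `A_{j+1}(y+1) = A_{j+1}(y) + A_j(y+p)` -/
lemma raneyA_rec (p : ℕ) (hp : 1 ≤ p) (y j : ℕ) :
    raneyA p (y+1) (j+1) = raneyA p y (j+1) + raneyA p (y+p) j := by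
  cases j with
  | zero =>
    simp only [raneyA_succ, raneyA_zero, zero_add, one_mul, Nat.choose_one_right,
      Nat.choose_zero_right, Nat.cast_one]
    push_cast
    ring
  | succ i =>
    obtain ⟨C, hC⟩ : ∃ C, y + (i+1+1)*p = C + 1 := ⟨y + (i+1+1)*p - 1, by
      have : 1 ≤ (i+1+1)*p := Nat.one_le_iff_ne_zero.2 (by positivity)
      omega⟩
    have e2 : y + 1 + (i+1+1)*p - 1 = C + 1 := by omega
    have e1 : y + 1 + (i+1+1)*p = C + 1 + 1 := by omega
    have e3 : y + (i+1+1)*p - 1 = C := by omega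
    have e45 : y + p + (i+1)*p = y + (i+1+1)*p := by ring
    have e4 : y + p + (i+1)*p = C + 1 := by omega
    have e5 : y + p + (i+1)*p - 1 = C := by omega
    rw [raneyA_succ, raneyA_succ, raneyA_succ, e2, e1, e3, e5, e4]
    rw [hC]
    rw [Nat.choose_succ_succ (C+1) (i+1), Nat.choose_succ_succ C i,
      Nat.choose_succ_succ C (i+1)]
    push_cast
    ring

lemma raneyA_conv (p : ℕ) (hp : 1 ≤ p) :
    ∀ n x y : ℕ, ∑ k ∈ Finset.range (n+1), raneyA p x k * raneyA p y (n-k)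
      = raneyA p (x+y) n := by
  intro n
  induction n using Nat.strong_induction_on with
  | _ n IH =>
    intro x y
    induction y with
    | zero =>
      rw [Finset.sum_eq_single n (fun k hk hkn => by
          have hk' : k < n := by simp only [Finset.mem_range] at hk; omega
          obtain ⟨m, hm⟩ : ∃ m, n - k = m + 1 := ⟨n - k - 1, by omega⟩
          rw [hm, raneyA_anchor p hp, mul_zero])
        (fun h => absurd (Finset.self_mem_range_succ n) h)]
      simp [raneyA_zero]
    | succ y IHy =>
      cases n with
      | zero => simp [raneyA_zero]
      | succ m =>
        rw [Finset.sum_range_succ]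
        have hsplit : ∀ k ∈ Finset.range (m+1),
            raneyA p x k * raneyA p (y+1) (m+1-k)
              = raneyA p x k * raneyA p y (m+1-k)
                + raneyA p x k * raneyA p (y+p) (m-k) := by
          intro k hk
          have hk' : k ≤ m := by simpa [Nat.lt_succ_iff] using hk
          have h1 : m + 1 - k = (m - k) + 1 := by omega
          rw [h1, raneyA_rec p hp, mul_add]
        rw [Finset.sum_congr rfl hsplit, Finset.sum_add_distrib]
        have hA : (∑ k ∈ Finset.range (m+1), raneyA p x k * raneyA p y (m+1-k))
            + raneyA p x (m+1) = raneyA p (x+y) (m+1) := by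
          rw [Finset.sum_range_succ] at IHy
          simpa [raneyA_zero] using IHy
        have hB : (∑ k ∈ Finset.range (m+1), raneyA p x k * raneyA p (y+p) (m-k))
            = raneyA p (x+y+p) m := by
          rw [IH m (by omega) x (y+p), show x+(y+p) = x+y+p from by omega]
        have hfin : raneyA p (x+(y+1)) (m+1)
            = raneyA p (x+y) (m+1) + raneyA p (x+y+p) m := by
          rw [show x+(y+1) = (x+y)+1 from rfl]
          exact raneyA_rec p hp (x+y) m
        rw [Nat.sub_self, raneyA_zero, mul_one, hfin, ← hA, ← hB]
        ring

open PowerSeries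

/-- step identity: `A_p(1,k+1) = A_p(p,k)`. -/
lemma raneyA_step (p : ℕ) (hp : 1 ≤ p) (k : ℕ) : raneyA p 1 (k+1) = raneyA p p k := by
  cases k with
  | zero =>
    rw [raneyA_succ, raneyA_zero]
    simp only [one_mul, Nat.choose_one_right, Nat.add_sub_cancel, Nat.choose_zero_right,
      Nat.cast_one]
    rw [Nat.choose_one_right]
    push_cast
    ring
  | succ i =>
    obtain ⟨C0, hC0⟩ : ∃ C0, (i+1+1)*p = C0 + 1 := ⟨(i+1+1)*p - 1, by
      have : 1 ≤ (i+1+1)*p := Nat.one_le_iff_ne_zero.2 (by positivity)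
      omega⟩
    have hNr : ((C0:ℝ)+1) = ((i:ℝ)+2)*(p:ℝ) := by
      have : (((i+1+1)*p : ℕ) : ℝ) = ((C0:ℕ) : ℝ) + 1 := by exact_mod_cast hC0
      push_cast at this
      linarith
    have e1 : 1 + (i+1+1)*p = C0 + 1 + 1 := by omega
    have e2 : 1 + (i+1+1)*p - 1 = C0 + 1 := by omega
    have e45 : p + (i+1)*p = (i+1+1)*p := by ring
    have e4 : p + (i+1)*p = C0 + 1 := by omega
    have e5 : p + (i+1)*p - 1 = C0 := by omega
    rw [raneyA_succ, raneyA_succ, e2, e1, e5, e4]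
    have ha := succ_mul_choose_cast (C0+1) (i+1)
    have hb := succ_mul_choose_cast C0 i
    have hne : (((i:ℝ)+2) * ((C0:ℝ)+1)) ≠ 0 := by positivity
    apply mul_left_cancel₀ hne
    push_cast at ha hb ⊢
    linear_combination (-((C0:ℝ)+1)) * ha + ((p:ℝ)*((i:ℝ)+2)) * hb
      + (((Nat.choose (C0+1) (i+1) : ℝ)) * (((C0:ℝ)+1) - ((i:ℝ)+1))) * hNr

lemma raneyA_eq_fussCatalan (p : ℕ) (hp : 1 ≤ p) (k : ℕ) :
    raneyA p 1 k = fussCatalan p k := by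
  cases k with
  | zero => simp [raneyA_zero, fussCatalan]
  | succ i =>
    obtain ⟨N, hN⟩ : ∃ N, (i+1)*p = N := ⟨(i+1)*p, rfl⟩
    have hNr : (N:ℝ) = ((i:ℝ)+1)*(p:ℝ) := by
      rw [← hN]; push_cast; ring
    have e1 : 1 + (i+1)*p = N + 1 := by omega
    have e2 : 1 + (i+1)*p - 1 = N := by omega
    have e3 : p * (i+1) = N := by rw [← hN]; ring
    rw [raneyA_succ, e2, e1, fussCatalan, e3]
    have ha := succ_mul_choose_cast N i
    have h1 : ((p:ℝ) * ((i:ℕ)+1 : ℕ) + 1 : ℝ) ≠ 0 := by positivity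
    rw [one_div, inv_mul_eq_div, eq_div_iff (by push_cast at h1 ⊢; positivity)]
    push_cast at ha ⊢
    linear_combination (-(p:ℝ)) * ha + ((p:ℝ) * ((Nat.choose N i : ℝ))) * hNr

/-- The generating series of `A_p(1,·)`. -/
noncomputable def Gser (p : ℕ) : PowerSeries ℝ := PowerSeries.mk (fun k => raneyA p 1 k)

lemma coeff_Gser_pow (p : ℕ) (hp : 1 ≤ p) :
    ∀ r k : ℕ, (PowerSeries.coeff k) (Gser p ^ r) = raneyA p r k := by
  intro r
  induction r with
  | zero =>
    intro k
    rw [pow_zero, PowerSeries.coeff_one]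
    cases k with
    | zero => simp [raneyA_zero]
    | succ j => simp [raneyA_anchor p hp j]
  | succ r IH =>
    intro k
    rw [pow_succ, PowerSeries.coeff_mul, Finset.Nat.sum_antidiagonal_eq_sum_range_succ_mk]
    simp only [IH]
    simp only [Gser, PowerSeries.coeff_mk]
    exact raneyA_conv p hp k r 1

lemma Gser_eq (p : ℕ) (hp : 1 ≤ p) :
    Gser p = 1 + PowerSeries.X * (Gser p) ^ p := by
  ext n
  cases n with
  | zero =>
    simp [Gser, PowerSeries.coeff_mk, raneyA_zero]
  | succ n =>
    rw [map_add, PowerSeries.coeff_succ_X_mul, coeff_Gser_pow p hp]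
    simp only [Gser, PowerSeries.coeff_mk, PowerSeries.coeff_one, Nat.succ_ne_zero, if_false]
    rw [raneyA_step p hp n]
    ring

/-- The map sending a power series `g(X)` to `g(X^2)`. -/
noncomputable def Emap (g : PowerSeries ℝ) : PowerSeries ℝ :=
  PowerSeries.mk fun n => if Even n then PowerSeries.coeff (n/2) g else 0

lemma coeff_Emap_even (g : PowerSeries ℝ) (k : ℕ) :
    PowerSeries.coeff (2*k) (Emap g) = PowerSeries.coeff k g := by
  rw [Emap, PowerSeries.coeff_mk, if_pos (even_two_mul k), show 2*k/2 = k from by omega]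

lemma coeff_Emap_of_odd (g : PowerSeries ℝ) {n : ℕ} (hn : ¬ Even n) :
    PowerSeries.coeff n (Emap g) = 0 := by
  rw [Emap, PowerSeries.coeff_mk, if_neg hn]

lemma sum_even_range (m : ℕ) (u : ℕ → ℝ) (h : ∀ i, ¬ Even i → u i = 0) :
    ∑ i ∈ Finset.range (2*m+1), u i = ∑ a ∈ Finset.range (m+1), u (2*a) := by
  induction m with
  | zero => simp
  | succ m IH =>
    have e : 2*(m+1)+1 = (2*m+1) + 1 + 1 := by ring
    rw [e, Finset.sum_range_succ, Finset.sum_range_succ, IH, Finset.sum_range_succ]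
    have hodd : u (2*m+1) = 0 := h _ (by simp [Nat.even_add_one, parity_simps])
    rw [hodd, show 2*m+1+1 = 2*(m+1) from by ring, Finset.sum_range_succ,
      Finset.sum_range_succ]
    ring

lemma Emap_mul (g h : PowerSeries ℝ) : Emap (g * h) = Emap g * Emap h := by
  ext n
  rw [PowerSeries.coeff_mul, Finset.Nat.sum_antidiagonal_eq_sum_range_succ_mk]
  by_cases hn : Even n
  · obtain ⟨m, hm⟩ := hn
    have hn2 : n = 2*m := by omega
    subst hn2
    rw [coeff_Emap_even, PowerSeries.coeff_mul,
      Finset.Nat.sum_antidiagonal_eq_sum_range_succ_mk,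
      sum_even_range m _ (fun i hi => by rw [coeff_Emap_of_odd g hi, zero_mul])]
    refine Finset.sum_congr rfl (fun a ha => ?_)
    have ha' : a ≤ m := by simpa [Nat.lt_succ_iff] using ha
    rw [show 2*m - 2*a = 2*(m-a) from by omega, coeff_Emap_even, coeff_Emap_even]
  · rw [coeff_Emap_of_odd _ hn]
    refine (Finset.sum_eq_zero (fun i hi => ?_)).symm
    have hi' : i ≤ n := by simpa [Nat.lt_succ_iff] using hi
    by_cases hie : Even i
    · have : ¬ Even (n - i) := by
        rw [Nat.even_sub hi']
        simp [hn, hie]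
      rw [coeff_Emap_of_odd _ this, mul_zero]
    · rw [coeff_Emap_of_odd _ hie, zero_mul]

lemma Emap_one : Emap (1 : PowerSeries ℝ) = 1 := by
  ext n
  rw [Emap, PowerSeries.coeff_mk]
  by_cases hn : Even n
  · rw [if_pos hn, PowerSeries.coeff_one, PowerSeries.coeff_one]
    obtain ⟨m, hm⟩ := hn
    subst hm
    by_cases h0 : m = 0
    · subst h0; norm_num
    · rw [if_neg (by omega), if_neg (by omega)]
  · rw [if_neg hn, PowerSeries.coeff_one, if_neg (by rintro rfl; exact hn Even.zero)]

lemma Emap_add (g h : PowerSeries ℝ) : Emap (g + h) = Emap g + Emap h := by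
  ext n
  simp only [Emap, PowerSeries.coeff_mk, map_add]
  split_ifs <;> simp

lemma Emap_X : Emap (PowerSeries.X : PowerSeries ℝ) = PowerSeries.X ^ 2 := by
  ext n
  rw [Emap, PowerSeries.coeff_mk]
  by_cases hn : Even n
  · rw [if_pos hn, PowerSeries.coeff_X, PowerSeries.coeff_X_pow]
    obtain ⟨m, hm⟩ := hn
    subst hm
    by_cases h2 : m = 1
    · subst h2; norm_num
    · rw [if_neg (by omega), if_neg (by omega)]
  · rw [if_neg hn, PowerSeries.coeff_X_pow, if_neg (by rintro rfl; exact hn (by decide))]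

lemma Emap_pow (g : PowerSeries ℝ) (r : ℕ) : Emap (g ^ r) = (Emap g) ^ r := by
  induction r with
  | zero => simpa using Emap_one
  | succ r IH => rw [pow_succ, Emap_mul, IH, pow_succ]

/-- If `M ∈ ℝ⟦X⟧` satisfies `M = 1 + X² * M^p` with `p ≥ 1`, then the coefficient of
`X^(2k)` in `M` is the Fuss–Catalan number `F_p(k)`, and all odd coefficients vanish. -/
theorem stmt2 (p : ℕ) (hp : 1 ≤ p) (M : PowerSeries ℝ)
    (hM : M = 1 + PowerSeries.X ^ 2 * M ^ p) :
    (∀ k : ℕ, (PowerSeries.coeff (2 * k)) M = fussCatalan p k) ∧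
      (∀ k : ℕ, (PowerSeries.coeff (2 * k + 1)) M = 0) := by
  set F := Emap (Gser p) with hFdef
  have hFeq : F = 1 + PowerSeries.X ^ 2 * F ^ p := by
    rw [hFdef]
    conv_lhs => rw [Gser_eq p hp]
    rw [Emap_add, Emap_one, Emap_mul, Emap_X, Emap_pow]
  have hdiff : M - F = PowerSeries.X ^ 2 * (M ^ p - F ^ p) := by
    conv_lhs => rw [hM, hFeq]
    ring
  have key : ∀ n : ℕ, (PowerSeries.X : PowerSeries ℝ) ^ n ∣ (M - F) := by
    intro n
    induction n with
    | zero => simp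
    | succ n ih =>
      have h2 : (PowerSeries.X : PowerSeries ℝ) ^ n ∣ (M ^ p - F ^ p) :=
        dvd_trans ih (sub_dvd_pow_sub_pow M F p)
      have h3 : (PowerSeries.X : PowerSeries ℝ) ^ 2 * PowerSeries.X ^ n ∣ M - F := by
        rw [hdiff]
        exact mul_dvd_mul_left _ h2
      refine dvd_trans ?_ h3
      rw [← pow_add]
      exact pow_dvd_pow _ (by omega)
  have hMF : M = F := by
    ext n
    have h := key (n+1)
    rw [PowerSeries.X_pow_dvd_iff] at h
    have h0 := h n (lt_add_one n)
    rw [map_sub, sub_eq_zero] at h0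
    exact h0
  constructor
  · intro k
    rw [hMF, hFdef, coeff_Emap_even]
    rw [show (PowerSeries.coeff k) (Gser p) = raneyA p 1 k from PowerSeries.coeff_mk _ _]
    exact raneyA_eq_fussCatalan p hp k
  · intro k
    rw [hMF, hFdef]
    exact coeff_Emap_of_odd _ (by simp [Nat.even_add_one, parity_simps])
end

section
/- Let q ≥ 1 be an integer and t a real number. If M ∈ ℝ⟦X⟧ is a formal power series satisfying M = 1 + X·M^q·(M + (t−1)), then for every n ≥ 1 the coefficient of X^n in M equals Σ_{b=1}^{n} F_q^b(n)·t^b, where F_q^b(n) = (1/b)·(n−1 choose b−1)·(qn choose b−1) is the Fuss–Narayana number. -/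
open PowerSeries



-- geometric series with remainder lemma
lemma geom_aux (A k : ℕ) (hk : k ≤ A) :
    (1 - X : PowerSeries ℝ) ^ (A - k) * PowerSeries.mk (fun l => ((A + 1 + l).choose (A + 1) : ℝ))
      = PowerSeries.mk (fun l => ((k + 1 + l).choose (k + 1) : ℝ)) := by
  set g : PowerSeries ℝ := PowerSeries.mk (fun l => ((A + 1 + l).choose (A + 1) : ℝ)) with hgdef
  set gk : PowerSeries ℝ := PowerSeries.mk (fun l => ((k + 1 + l).choose (k + 1) : ℝ)) with hgkdef
  have hgA : g * (1 - X) ^ (A + 2) = 1 := mk_add_choose_mul_one_sub_pow_eq_one ℝ (A + 1)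
  have hgk : gk * (1 - X) ^ (k + 2) = 1 := mk_add_choose_mul_one_sub_pow_eq_one ℝ (k + 1)
  have hpow : (1 - X : PowerSeries ℝ) ^ (A - k) * (1 - X) ^ (k + 2) = (1 - X) ^ (A + 2) := by
    rw [← pow_add]; congr 1; omega
  linear_combination (gk * g) * hpow - ((1 - X : PowerSeries ℝ) ^ (A - k) * g) * hgk + gk * hgA


lemma resid_aux (q0 i : ℕ) (M N : PowerSeries ℝ) (hMN : M * N = 1) :
    (PowerSeries.coeff (R := ℝ) (i + 1)) (N ^ ((q0 + 1) * (i + 2)) * (d⁄dX ℝ) (X * M ^ (q0 + 1))) = 0 := by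
  have hp : ∀ k : ℕ, M ^ k * N ^ k = 1 := fun k => by rw [← mul_pow, hMN, one_pow]
  obtain ⟨a', ha'⟩ : ∃ a', (q0 + 1) * (i + 1) = a' + 1 := ⟨q0 * (i + 1) + i, by ring⟩
  have hDN : (d⁄dX ℝ) N = -(N ^ 2 * (d⁄dX ℝ) M) := by
    have h := congrArg (d⁄dX ℝ) hMN
    rw [Derivation.leibniz, Derivation.map_one_eq_zero] at h
    simp only [smul_eq_mul] at h
    linear_combination N * h - (d⁄dX ℝ) N * hMN
  have hW : (d⁄dX ℝ) (X * M ^ (q0 + 1)) =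
      M ^ (q0 + 1) + X * (((q0 : PowerSeries ℝ) + 1) * (M ^ q0 * (d⁄dX ℝ) M)) := by
    rw [Derivation.leibniz, Derivation.leibniz_pow, derivative_X]
    simp only [smul_eq_mul, mul_one, Nat.add_sub_cancel, nsmul_eq_mul]
    push_cast
    ring
  have hXN : (d⁄dX ℝ) (X * N ^ (a' + 1)) =
      N ^ (a' + 1) + X * (((a' : PowerSeries ℝ) + 1) * (N ^ a' * (d⁄dX ℝ) N)) := by
    rw [Derivation.leibniz, Derivation.leibniz_pow, derivative_X]
    simp only [smul_eq_mul, mul_one, Nat.add_sub_cancel, nsmul_eq_mul]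
    push_cast
    ring
  have hx1 : N ^ ((q0 + 1) * (i + 2)) = N ^ (a' + 1) * N ^ (q0 + 1) := by
    rw [← pow_add]
    congr 1
    have h : (q0 + 1) * (i + 2) = (q0 + 1) * (i + 1) + (q0 + 1) := by ring
    rw [h, ha']
  have hx2 : N ^ ((q0 + 1) * (i + 2)) = N ^ (a' + 2) * N ^ q0 := by
    rw [← pow_add]
    congr 1
    have h : (q0 + 1) * (i + 2) = (q0 + 1) * (i + 1) + (q0 + 1) := by ring
    rw [h, ha']
    omega
  have hr1 : N ^ ((q0 + 1) * (i + 2)) * M ^ (q0 + 1) = N ^ (a' + 1) := by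
    rw [hx1, mul_assoc, mul_comm (N ^ (q0+1)), hp (q0+1), mul_one]
  have hr2 : N ^ ((q0 + 1) * (i + 2)) * M ^ q0 = N ^ (a' + 2) := by
    rw [hx2, mul_assoc, mul_comm (N ^ q0), hp q0, mul_one]
  have hcast : ((a' : PowerSeries ℝ) + 1) = ((q0 : PowerSeries ℝ) + 1) * ((i : PowerSeries ℝ) + 1) := by
    exact_mod_cast congrArg (fun k : ℕ => (k : PowerSeries ℝ)) ha'.symm
  have hid : ((i : PowerSeries ℝ) + 1) * (N ^ ((q0 + 1) * (i + 2)) * (d⁄dX ℝ) (X * M ^ (q0 + 1)))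
      = ((i : PowerSeries ℝ) + 2) * N ^ (a' + 1) - (d⁄dX ℝ) (X * N ^ (a' + 1)) := by
    rw [hW, hXN, hDN]
    linear_combination (((i : PowerSeries ℝ) + 1)) * hr1 +
      (((i : PowerSeries ℝ) + 1) * ((q0 : PowerSeries ℝ) + 1) * X * (d⁄dX ℝ) M) * hr2 -
      (X * N ^ (a' + 2) * (d⁄dX ℝ) M) * hcast
  have hcoeff := congrArg (PowerSeries.coeff (R := ℝ) (i + 1)) hid
  have e1 : ((i : PowerSeries ℝ) + 1) = C (R := ℝ) ((i : ℝ) + 1) := by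
    rw [map_add, map_natCast, map_one]
  have e2 : ((i : PowerSeries ℝ) + 2) = C (R := ℝ) ((i : ℝ) + 2) := by
    rw [map_add, map_natCast, map_ofNat]
  rw [e1, e2, map_sub, coeff_C_mul, coeff_C_mul, coeff_derivative, coeff_succ_X_mul] at hcoeff
  have hz : ((i : ℝ) + 1) * (PowerSeries.coeff (R := ℝ) (i + 1))
      (N ^ ((q0 + 1) * (i + 2)) * (d⁄dX ℝ) (X * M ^ (q0 + 1))) = 0 := by
    rw [hcoeff]; push_cast; ring
  have hne : ((i : ℝ) + 1) ≠ 0 := by positivity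
  exact (mul_eq_zero.mp hz).resolve_left hne



/-- The Fuss–Narayana number `F_q^b(n) = (1/b) * (n-1 choose b-1) * (qn choose b-1)`,
as a real number. -/
noncomputable def fussNarayana (q n b : ℕ) : ℝ :=
  (1 / (b : ℝ)) * (Nat.choose (n - 1) (b - 1) : ℝ) * (Nat.choose (q * n) (b - 1) : ℝ)

/-- If `M ∈ ℝ⟦X⟧` satisfies `M = 1 + X * M^q * (M + (t-1))` with `q ≥ 1`, then for `n ≥ 1`
the coefficient of `X^n` in `M` is the Fuss–Narayana polynomial `Σ_{b=1}^n F_q^b(n) t^b`. -/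
theorem stmt3 (q : ℕ) (hq : 1 ≤ q) (t : ℝ) (M : PowerSeries ℝ)
    (hM : M = 1 + PowerSeries.X * M ^ q * (M + PowerSeries.C (R := ℝ) (t - 1))) :
    ∀ n : ℕ, 1 ≤ n →
      (PowerSeries.coeff (R := ℝ) n) M = ∑ b ∈ Finset.Icc 1 n, fussNarayana q n b * t ^ b := by
  intro n hn
  obtain ⟨q0, rfl⟩ : ∃ q0, q = q0 + 1 := ⟨q - 1, by omega⟩
  obtain ⟨m, rfl⟩ : ∃ m, n = m + 1 := ⟨n - 1, by omega⟩
  clear hq hn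
  -- basic constants
  have hc0 : constantCoeff (R := ℝ) M = 1 := by
    have h := congrArg (constantCoeff (R := ℝ)) hM
    simpa using h
  have hMne : constantCoeff M ≠ 0 := by rw [hc0]; norm_num
  set N : PowerSeries ℝ := M⁻¹ with hNdef
  have hMN : M * N = 1 := PowerSeries.mul_inv_cancel M hMne
  have hp : ∀ k : ℕ, M ^ k * N ^ k = 1 := fun k => by rw [← mul_pow, hMN, one_pow]
  set W : PowerSeries ℝ := X * M ^ (q0 + 1) with hWdef
  have h1 : M * (1 - W) = 1 + C (R := ℝ) (t - 1) * W := by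
    rw [hWdef]; linear_combination hM
  have hV0 : constantCoeff (R := ℝ) (1 - W) ≠ 0 := by
    rw [hWdef]; simp
  set V' : PowerSeries ℝ := (1 - W)⁻¹ with hV'def
  have hVV' : (1 - W) * V' = 1 := PowerSeries.mul_inv_cancel _ hV0
  have hu : ∀ k : ℕ, (1 - W) ^ k * V' ^ k = 1 := fun k => by rw [← mul_pow, hVV', one_pow]
  -- derivative relation
  have h2 : (d⁄dX ℝ) M * (1 - W) ^ 2 = C (R := ℝ) t * (d⁄dX ℝ) W := by
    have h := congrArg (d⁄dX ℝ) h1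
    rw [Derivation.leibniz] at h
    simp only [smul_eq_mul, map_add, map_sub, Derivation.map_one_eq_zero, derivative_C,
      Derivation.leibniz] at h
    -- h should now say : M * (0 - D W) + (1 - W) * D M = 0 + (C (t-1) * D W + W * 0)
    have hCt : C (R := ℝ) t = C (R := ℝ) (t - 1) + 1 := by
      rw [← map_one (C (R := ℝ)), ← map_add]; norm_num
    have hCsub : C (R := ℝ) (t - 1) = C (R := ℝ) t - C (R := ℝ) 1 := by rw [← map_sub]
    rw [hCt]
    linear_combination (1 - W) * h + (d⁄dX ℝ) W * h1
      - ((d⁄dX ℝ) W * (1 - W)) * hCsub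
  -- the comparison power series and its truncation
  set A : ℕ := (q0 + 1) * (m + 1) with hAdef
  set g : PowerSeries ℝ := PowerSeries.mk (fun l => ((A + 1 + l).choose (A + 1) : ℝ)) with hgdef
  have hginv : g * (1 - X) ^ (A + 2) = 1 := mk_add_choose_mul_one_sub_pow_eq_one ℝ (A + 1)
  set σ : PowerSeries ℝ := (1 + C (R := ℝ) (t - 1) * X) ^ A * g with hσdef
  set P : Polynomial ℝ := trunc (m + 1) σ with hPdef
  have hPdeg : P.natDegree < m + 1 := natDegree_trunc_lt σ m
  have hdvd : (X : PowerSeries ℝ) ^ (m + 1) ∣ σ - (P : PowerSeries ℝ) := by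
    rw [PowerSeries.X_pow_dvd_iff]
    intro d hd
    rw [map_sub, Polynomial.coeff_coe, hPdef, coeff_trunc, if_pos hd, sub_self]
  obtain ⟨c, hc⟩ := hdvd
  have hdvdpoly : (Polynomial.X : Polynomial ℝ) ^ (m + 1) ∣
      ((1 + Polynomial.C (t - 1) * Polynomial.X) ^ A - P * (1 - Polynomial.X) ^ (A + 2)) := by
    rw [Polynomial.X_pow_dvd_iff]
    intro d hd
    have hcoe : (((1 + Polynomial.C (t - 1) * Polynomial.X) ^ A
          - P * (1 - Polynomial.X) ^ (A + 2) : Polynomial ℝ) : PowerSeries ℝ)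
        = (σ - (P : PowerSeries ℝ)) * (1 - X) ^ (A + 2) := by
      push_cast
      rw [hσdef]
      linear_combination (-(1 + C (R := ℝ) (t - 1) * X) ^ A : PowerSeries ℝ) * hginv
    have h0 : PowerSeries.coeff (R := ℝ) d (((1 + Polynomial.C (t - 1) * Polynomial.X) ^ A
          - P * (1 - Polynomial.X) ^ (A + 2) : Polynomial ℝ) : PowerSeries ℝ) = 0 := by
      rw [hcoe, hc, mul_assoc, PowerSeries.coeff_X_pow_mul', if_neg (by omega)]
    rwa [Polynomial.coeff_coe] at h0
  obtain ⟨s, hs⟩ := hdvdpoly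
  -- transfer to W
  have haev : (1 + C (R := ℝ) (t - 1) * W) ^ A - (Polynomial.aeval W P) * (1 - W) ^ (A + 2)
      = W ^ (m + 1) * Polynomial.aeval W s := by
    have h := congrArg (Polynomial.aeval W) hs
    simpa only [map_sub, map_mul, map_pow, map_add, map_one, Polynomial.aeval_X,
      Polynomial.aeval_C, ← PowerSeries.C_eq_algebraMap] using h
  have h1A : M ^ A * (1 - W) ^ A = (1 + C (R := ℝ) (t - 1) * W) ^ A := by rw [← mul_pow, h1]
  have hMAV : M ^ A * V' ^ 2 = Polynomial.aeval W P
      + W ^ (m + 1) * Polynomial.aeval W s * V' ^ (A + 2) := by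
    linear_combination (V' ^ (A + 2)) * haev + (V' ^ (A + 2)) * h1A
      - (M ^ A * V' ^ 2) * hu A + (Polynomial.aeval W P) * hu (A + 2)
  -- main formula for D M
  have hDM : (d⁄dX ℝ) M = C (R := ℝ) t * (d⁄dX ℝ) W * (N ^ A * Polynomial.aeval W P)
      + C (R := ℝ) t * (d⁄dX ℝ) W * (N ^ A * (W ^ (m + 1) * Polynomial.aeval W s * V' ^ (A + 2))) := by
    linear_combination (C (R := ℝ) t * (d⁄dX ℝ) W * N ^ A) * hMAV
      - (C (R := ℝ) t * (d⁄dX ℝ) W * V' ^ 2) * hp A - ((d⁄dX ℝ) M) * hu 2 + (V' ^ 2) * h2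
  -- claim B : residue computation
  have claimB : ∀ j, j ≤ m →
      PowerSeries.coeff (R := ℝ) m (N ^ A * W ^ j * (d⁄dX ℝ) W) = if j = m then 1 else 0 := by
    intro j hj
    have hsplit : N ^ A = N ^ ((q0 + 1) * (m + 1 - j)) * N ^ ((q0 + 1) * j) := by
      rw [← pow_add]
      congr 1
      rw [hAdef, ← Nat.left_distrib]
      congr 1
      omega
    have hWj : N ^ A * W ^ j * (d⁄dX ℝ) W
        = X ^ j * (N ^ ((q0 + 1) * (m + 1 - j)) * (d⁄dX ℝ) W) := by
      rw [hWdef, mul_pow, ← pow_mul, hsplit]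
      have hcan : N ^ ((q0 + 1) * j) * M ^ ((q0 + 1) * j) = 1 := by
        rw [mul_comm]; exact hp _
      linear_combination (X ^ j * N ^ ((q0 + 1) * (m + 1 - j)) * (d⁄dX ℝ) (X * M ^ (q0 + 1))) * hcan
    rw [hWj]
    rcases eq_or_lt_of_le hj with rfl | hlt
    · rw [if_pos rfl]
      have h0 : PowerSeries.coeff (R := ℝ) (0 + j) (X ^ j * (N ^ ((q0 + 1) * (j + 1 - j)) * (d⁄dX ℝ) W))
          = PowerSeries.coeff (R := ℝ) 0 (N ^ ((q0 + 1) * (j + 1 - j)) * (d⁄dX ℝ) W) :=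
        PowerSeries.coeff_X_pow_mul _ j 0
      rw [zero_add] at h0
      rw [h0]
      have hjj : (q0 + 1) * (j + 1 - j) = q0 + 1 := by simp
      rw [hjj, coeff_zero_eq_constantCoeff, map_mul, map_pow]
      have hccN : constantCoeff (R := ℝ) N = 1 := by
        have h := congrArg (constantCoeff (R := ℝ)) hMN
        rw [map_mul, hc0, one_mul, map_one] at h
        exact h
      have hccDW : constantCoeff (R := ℝ) ((d⁄dX ℝ) W) = 1 := by
        rw [← coeff_zero_eq_constantCoeff, coeff_derivative, hWdef, coeff_succ_X_mul]
        simp [hc0]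
      rw [hccN, hccDW, one_pow, one_mul]
    · rw [if_neg (by omega)]
      set i : ℕ := m - j - 1 with hidef
      have hm' : m = (i + 1) + j := by omega
      have he : (q0 + 1) * (m + 1 - j) = (q0 + 1) * (i + 2) := by
        congr 1; omega
      rw [he, hm', PowerSeries.coeff_X_pow_mul, hWdef]
      exact resid_aux q0 i M N hMN
  -- coefficient extraction
  have hcoeffm : PowerSeries.coeff (R := ℝ) m ((d⁄dX ℝ) M) = t * PowerSeries.coeff (R := ℝ) m σ := by
    rw [hDM, map_add]
    have hzero : PowerSeries.coeff (R := ℝ) m (C (R := ℝ) t * (d⁄dX ℝ) W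
        * (N ^ A * (W ^ (m + 1) * Polynomial.aeval W s * V' ^ (A + 2)))) = 0 := by
      have hW1 : C (R := ℝ) t * (d⁄dX ℝ) W * (N ^ A * (W ^ (m + 1) * Polynomial.aeval W s * V' ^ (A + 2)))
          = X ^ (m + 1) * (C (R := ℝ) t * (d⁄dX ℝ) W * N ^ A * (M ^ (q0 + 1)) ^ (m + 1)
            * Polynomial.aeval W s * V' ^ (A + 2)) := by
        rw [hWdef, mul_pow]; ring
      rw [hW1, PowerSeries.coeff_X_pow_mul', if_neg (by omega)]
    rw [hzero, add_zero]
    rw [Polynomial.aeval_eq_sum_range' hPdeg]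
    have hsum1 : C (R := ℝ) t * (d⁄dX ℝ) W * (N ^ A * ∑ j ∈ Finset.range (m + 1), P.coeff j • W ^ j)
        = ∑ j ∈ Finset.range (m + 1), P.coeff j • (C (R := ℝ) t * (N ^ A * W ^ j * (d⁄dX ℝ) W)) := by
      rw [Finset.mul_sum, Finset.mul_sum]
      exact Finset.sum_congr rfl fun j _ => by rw [mul_smul_comm, mul_smul_comm]; ring_nf
    rw [hsum1, map_sum]
    have hterm : ∀ j ∈ Finset.range (m + 1),
        PowerSeries.coeff (R := ℝ) m (P.coeff j • (C (R := ℝ) t * (N ^ A * W ^ j * (d⁄dX ℝ) W)))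
          = if j = m then t * P.coeff j else 0 := by
      intro j hj
      rw [PowerSeries.coeff_smul, coeff_C_mul,
        claimB j (Nat.lt_succ_iff.mp (Finset.mem_range.mp hj))]
      split_ifs with h <;> simp [smul_eq_mul, mul_comm]
    rw [Finset.sum_congr rfl hterm]
    rw [Finset.sum_ite_eq' (Finset.range (m + 1)) m (fun j => t * P.coeff j)]
    rw [if_pos (Finset.self_mem_range_succ m)]
    have hPm : P.coeff m = PowerSeries.coeff (R := ℝ) m σ := by
      rw [hPdef, coeff_trunc, if_pos (by omega)]
    rw [hPm]
  -- coefficient of σ via binomial expansion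
  have hσm : PowerSeries.coeff (R := ℝ) m σ
      = ∑ b ∈ Finset.range (m + 1), (A.choose b : ℝ) * (((m + 1).choose (b + 1) : ℕ) : ℝ) * t ^ b := by
    have hsplit : (1 + C (R := ℝ) (t - 1) * X : PowerSeries ℝ) = C (R := ℝ) t * X + (1 - X) := by
      have h : C (R := ℝ) (t - 1) = C (R := ℝ) t - 1 := by rw [map_sub, map_one]
      rw [h]; ring
    rw [hσdef, hsplit, add_pow, Finset.sum_mul, map_sum]
    have hterm : ∀ k ∈ Finset.range (A + 1),
        PowerSeries.coeff (R := ℝ) m ((C (R := ℝ) t * X) ^ k * (1 - X) ^ (A - k)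
            * ((A.choose k : ℕ) : PowerSeries ℝ) * g)
          = if k ≤ m then (A.choose k : ℝ) * (((m + 1).choose (k + 1) : ℕ) : ℝ) * t ^ k else 0 := by
      intro k hk
      have hkA : k ≤ A := Nat.lt_succ_iff.mp (Finset.mem_range.mp hk)
      have hre : (C (R := ℝ) t * X) ^ k * (1 - X) ^ (A - k) * ((A.choose k : ℕ) : PowerSeries ℝ) * g
          = C (R := ℝ) (((A.choose k : ℕ) : ℝ) * t ^ k) * (X ^ k * ((1 - X) ^ (A - k) * g)) := by
        rw [mul_pow, map_mul, ← map_pow, map_natCast]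
        ring
      rw [hre, coeff_C_mul, hgdef, geom_aux A k hkA, PowerSeries.coeff_X_pow_mul']
      split_ifs with h
      · rw [coeff_mk]
        have he : k + 1 + (m - k) = m + 1 := by omega
        rw [he]
        ring
      · rw [mul_zero]
    rw [Finset.sum_congr rfl hterm]
    have hAm : m + 1 ≤ A + 1 := by
      have h' : m + 1 ≤ (q0 + 1) * (m + 1) := Nat.le_mul_of_pos_left (m + 1) (by omega)
      omega
    rw [← Finset.sum_subset (Finset.range_subset_range.mpr hAm) (fun x hx hnx => by
      have hxm : ¬ x ≤ m := fun hxm => hnx (Finset.mem_range.mpr (by omega))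
      rw [if_neg hxm])]
    exact Finset.sum_congr rfl fun k hk => if_pos (Nat.lt_succ_iff.mp (Finset.mem_range.mp hk))
  -- assemble
  have hder : PowerSeries.coeff (R := ℝ) m ((d⁄dX ℝ) M)
      = PowerSeries.coeff (R := ℝ) (m + 1) M * ((m : ℝ) + 1) := by
    simpa using coeff_derivative M m
  have hmain : PowerSeries.coeff (R := ℝ) (m + 1) M * ((m : ℝ) + 1)
      = ∑ b ∈ Finset.range (m + 1),
          (A.choose b : ℝ) * (((m + 1).choose (b + 1) : ℕ) : ℝ) * t ^ (b + 1) := by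
    rw [← hder, hcoeffm, hσm, Finset.mul_sum]
    exact Finset.sum_congr rfl fun b _ => by ring
  -- reindex the target sum
  have htarget : ∑ b ∈ Finset.Icc 1 (m + 1), fussNarayana (q0 + 1) (m + 1) b * t ^ b
      = ∑ b ∈ Finset.range (m + 1), fussNarayana (q0 + 1) (m + 1) (b + 1) * t ^ (b + 1) := by
    have hsub : Finset.Icc 1 (m + 1) ⊆ Finset.range (m + 2) := by
      intro x hx
      rw [Finset.mem_Icc] at hx
      exact Finset.mem_range.mpr (by omega)
    have h0 : ∀ x ∈ Finset.range (m + 2), x ∉ Finset.Icc 1 (m + 1) →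
        fussNarayana (q0 + 1) (m + 1) x * t ^ x = 0 := by
      intro x hx hnx
      have hx0 : x = 0 := by
        rw [Finset.mem_range] at hx
        rw [Finset.mem_Icc] at hnx
        omega
      subst hx0
      simp [fussNarayana]
    rw [Finset.sum_subset hsub h0, Finset.sum_range_succ']
    simp [fussNarayana]
  rw [htarget]
  have hne : ((m : ℝ) + 1) ≠ 0 := by positivity
  apply mul_right_cancel₀ hne
  rw [hmain, Finset.sum_mul]
  apply Finset.sum_congr rfl
  intro b _
  have hfn : fussNarayana (q0 + 1) (m + 1) (b + 1)
      = (1 / ((b : ℝ) + 1)) * ((m.choose b : ℕ) : ℝ) * ((A.choose b : ℕ) : ℝ) := by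
    rw [fussNarayana, hAdef]
    norm_num
  have hch : ((m : ℝ) + 1) * ((m.choose b : ℕ) : ℝ)
      = (((m + 1).choose (b + 1) : ℕ) : ℝ) * ((b : ℝ) + 1) := by
    exact_mod_cast congrArg (Nat.cast : ℕ → ℝ) (Nat.add_one_mul_choose_eq m b)
  have hbne : ((b : ℝ) + 1) ≠ 0 := by positivity
  rw [hfn]
  field_simp
  linear_combination (-(((A.choose b : ℕ) : ℝ)) * t ^ (b + 1)) * hch
end

section
/- For every integer p ≥ 1 there exists a probability measure μ_p on ℝ whose support is contained in the interval [−√(p^p/(p−1)^{p−1}), √(p^p/(p−1)^{p−1})] (with the convention 0^0 = 1 when p = 1) and whose moments are given, for every k ≥ 0, by ∫ x^{2k} dμ_p(x) = F_p(k) = (1/(pk+1))·(pk+1 choose k) and ∫ x^{2k+1} dμ_p(x) = 0. -/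
open MeasureTheory
open Set

noncomputable def betaDens (a b : ℝ) (x : ℝ) : ℝ := x ^ (a-1) * (1-x) ^ (b-1)

noncomputable def rBeta (a b : ℝ) : ℝ := ∫ x in Ioc (0:ℝ) 1, betaDens a b x

lemma betaDens_ofReal {a b : ℝ} {x : ℝ} (hx : 0 ≤ x) (hx1 : x ≤ 1) :
    ((betaDens a b x : ℝ) : ℂ) = (x:ℂ) ^ ((a:ℂ) - 1) * (1 - (x:ℂ)) ^ ((b:ℂ) - 1) := by
  have h1 : (0:ℝ) ≤ 1 - x := by linarith
  rw [betaDens, Complex.ofReal_mul, Complex.ofReal_cpow hx, Complex.ofReal_cpow h1]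
  push_cast
  ring_nf

lemma betaDens_nonneg (a b : ℝ) {x : ℝ} (hx : 0 ≤ x) (hx1 : x ≤ 1) : 0 ≤ betaDens a b x :=
  mul_nonneg (Real.rpow_nonneg hx _) (Real.rpow_nonneg (by linarith) _)

lemma measurable_betaDens (a b : ℝ) : Measurable (betaDens a b) := by
  unfold betaDens
  fun_prop

lemma integrableOn_betaDens {a b : ℝ} (ha : 0 < a) (hb : 0 < b) :
    IntegrableOn (betaDens a b) (Ioc (0:ℝ) 1) := by
  have h := Complex.betaIntegral_convergent (u := a) (v := b) (by simpa) (by simpa)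
  rw [intervalIntegrable_iff_integrableOn_Ioc_of_le zero_le_one] at h
  refine h.re.congr ?_
  filter_upwards [ae_restrict_mem measurableSet_Ioc] with x hx
  rw [← betaDens_ofReal hx.1.le hx.2]
  simp

lemma ofReal_rBeta {a b : ℝ} (ha : 0 < a) (hb : 0 < b) :
    ((rBeta a b : ℝ) : ℂ) = Complex.betaIntegral a b := by
  have h : ∫ x in Ioc (0:ℝ) 1, (x:ℂ) ^ ((a:ℂ) - 1) * (1 - (x:ℂ)) ^ ((b:ℂ) - 1)
      = ∫ x in Ioc (0:ℝ) 1, ((betaDens a b x : ℝ) : ℂ) :=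
    (setIntegral_congr_fun measurableSet_Ioc fun x hx => (betaDens_ofReal hx.1.le hx.2).symm)
  rw [Complex.betaIntegral, intervalIntegral.integral_of_le zero_le_one, h]
  exact (integral_ofReal).symm

lemma rBeta_pos {a b : ℝ} (ha : 0 < a) (hb : 0 < b) : 0 < rBeta a b := by
  rw [rBeta, integral_Ioc_eq_integral_Ioo]
  refine (setIntegral_pos_iff_support_of_nonneg_ae ?_ ?_).2 ?_
  · filter_upwards [ae_restrict_mem measurableSet_Ioo] with x hx
    exact betaDens_nonneg a b hx.1.le hx.2.le
  · exact (integrableOn_betaDens ha hb).mono_set Ioo_subset_Ioc_self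
  · have hsub : Ioo (0:ℝ) 1 ⊆ Function.support (betaDens a b) ∩ Ioo 0 1 := by
      intro x hx
      refine ⟨?_, hx⟩
      have : 0 < betaDens a b x :=
        mul_pos (Real.rpow_pos_of_pos hx.1 _) (Real.rpow_pos_of_pos (by linarith [hx.2]) _)
      exact this.ne'
    calc (0:ENNReal) < volume (Ioo (0:ℝ) 1) := by simp
    _ ≤ _ := measure_mono hsub

lemma rBeta_rec {a b : ℝ} (ha : 0 < a) (hb : 0 < b) :
    rBeta (a+1) b = a / (a+b) * rBeta a b := by
  have ha' : 0 < (a:ℂ).re := by simpa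
  have hb' : 0 < (b:ℂ).re := by simpa
  have hab : 0 < ((a:ℂ)+(b:ℂ)).re := by simp; positivity
  have habne : (a:ℂ) + b ≠ 0 := fun h => by rw [h] at hab; simp at hab
  have h1 := Complex.Gamma_mul_Gamma_eq_betaIntegral (s := (a:ℂ)+1) (t := b)
    (by simp; positivity) hb'
  have h2 := Complex.Gamma_mul_Gamma_eq_betaIntegral (s := a) (t := b) ha' hb'
  have hga : Complex.Gamma ((a:ℂ)+1) = a * Complex.Gamma a :=
    Complex.Gamma_add_one _ (Complex.ofReal_ne_zero.2 ha.ne')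
  have e1 : Complex.Gamma ((a:ℂ)+1+b) = ((a:ℂ)+b) * Complex.Gamma ((a:ℂ)+b) := by
    rw [show (a:ℂ)+1+b = ((a:ℂ)+b)+1 by ring, Complex.Gamma_add_one _ habne]
  have hgne : Complex.Gamma ((a:ℂ)+b) ≠ 0 := Complex.Gamma_ne_zero_of_re_pos hab
  rw [hga, e1] at h1
  have h3 : (((a:ℂ)+b) * Complex.betaIntegral ((a:ℂ)+1) b) * Complex.Gamma ((a:ℂ)+b)
      = ((a:ℂ) * Complex.betaIntegral a b) * Complex.Gamma ((a:ℂ)+b) := by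
    linear_combination (a:ℂ) * h2 - h1
  have h4 := mul_right_cancel₀ hgne h3
  have key : Complex.betaIntegral ((a:ℂ)+1) b = ((a:ℂ)/((a:ℂ)+b)) * Complex.betaIntegral a b := by
    field_simp
    linear_combination h4
  apply Complex.ofReal_injective
  rw [Complex.ofReal_mul, ofReal_rBeta (by linarith) hb, ofReal_rBeta ha hb,
    Complex.ofReal_div]
  push_cast
  push_cast at key
  exact key

noncomputable def betaMeasure (a b : ℝ) : Measure ℝ :=
  (ENNReal.ofReal (rBeta a b))⁻¹ •
    (volume.restrict (Ioc (0:ℝ) 1)).withDensity (fun x => ENNReal.ofReal (betaDens a b x))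

lemma betaMeasure_prob {a b : ℝ} (ha : 0 < a) (hb : 0 < b) :
    IsProbabilityMeasure (betaMeasure a b) := by
  constructor
  rw [betaMeasure, Measure.smul_apply, smul_eq_mul, withDensity_apply _ MeasurableSet.univ,
    Measure.restrict_univ]
  rw [← ofReal_integral_eq_lintegral_ofReal (integrableOn_betaDens ha hb)
    (by filter_upwards [ae_restrict_mem measurableSet_Ioc] with x hx using
      betaDens_nonneg a b hx.1.le hx.2)]
  rw [← rBeta, ENNReal.inv_mul_cancel]
  · simp [ENNReal.ofReal_eq_zero, not_le, rBeta_pos ha hb]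
  · exact ENNReal.ofReal_ne_top

lemma betaMeasure_compl {a b : ℝ} : betaMeasure a b (Icc (0:ℝ) 1)ᶜ = 0 := by
  rw [betaMeasure, Measure.smul_apply, withDensity_apply _ (measurableSet_Icc.compl),
    Measure.restrict_restrict (measurableSet_Icc.compl)]
  have : (Icc (0:ℝ) 1)ᶜ ∩ Ioc (0:ℝ) 1 = ∅ :=
    eq_empty_iff_forall_notMem.2 (fun x ⟨hc, h1, h2⟩ => hc ⟨h1.le, h2⟩)
  rw [this]
  simp

lemma betaMeasure_moment {a b : ℝ} (ha : 0 < a) (hb : 0 < b) (k : ℕ) :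
    ∫ x, x ^ k ∂(betaMeasure a b) = rBeta (a + k) b / rBeta a b := by
  rw [betaMeasure, integral_smul_measure]
  have htoReal : (ENNReal.ofReal (rBeta a b))⁻¹.toReal = (rBeta a b)⁻¹ := by
    rw [ENNReal.toReal_inv, ENNReal.toReal_ofReal (rBeta_pos ha hb).le]
  have hd : (fun x => ENNReal.ofReal (betaDens a b x))
      = fun x => ((betaDens a b x).toNNReal : ENNReal) := by
    ext x; rw [ENNReal.ofReal]
  rw [htoReal, hd, integral_withDensity_eq_integral_smul
    ((measurable_betaDens a b).real_toNNReal) (fun x => x ^ k)]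
  have : ∫ x in Ioc (0:ℝ) 1, (betaDens a b x).toNNReal • x ^ k
      = ∫ x in Ioc (0:ℝ) 1, betaDens (a + k) b x := by
    refine setIntegral_congr_fun measurableSet_Ioc (fun x hx => ?_)
    have hx0 : (0:ℝ) < x := hx.1
    rw [NNReal.smul_def, Real.coe_toNNReal _ (betaDens_nonneg a b hx0.le hx.2)]
    show betaDens a b x * x ^ k = _
    rw [betaDens, betaDens, ← Real.rpow_natCast x k, mul_right_comm,
      ← Real.rpow_add hx0]
    ring_nf
  rw [this]
  show (rBeta a b)⁻¹ • rBeta (a + k) b = _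
  rw [smul_eq_mul, div_eq_mul_inv, mul_comm]

lemma betaMeasure_moment' {a b : ℝ} (ha : 0 < a) (hb : 0 < b) (k : ℕ) :
    ∫ x, x ^ k ∂(betaMeasure a b) = ∏ i ∈ Finset.range k, (a + i) / (a + b + i) := by
  rw [betaMeasure_moment ha hb]
  induction k with
  | zero => simp [div_self (rBeta_pos ha hb).ne']
  | succ n ih =>
    have hk : a + (n+1:ℕ) = (a + n) + 1 := by push_cast; ring
    rw [Finset.prod_range_succ, ← ih, hk, rBeta_rec (by positivity) hb]
    field_simp
    ring

lemma mul_mem_Icc01 {x y : ℝ} (hx : x ∈ Icc (0:ℝ) 1) (hy : y ∈ Icc (0:ℝ) 1) :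
    x * y ∈ Icc (0:ℝ) 1 :=
  ⟨mul_nonneg hx.1 hy.1, mul_le_one₀ hx.2 hy.1 hy.2⟩

lemma prod_compl_null {ρ ν : Measure ℝ} [IsProbabilityMeasure ρ] [IsProbabilityMeasure ν]
    {s t : Set ℝ} (hs : MeasurableSet s) (ht : MeasurableSet t)
    (hρ : ρ sᶜ = 0) (hν : ν tᶜ = 0) : (ρ.prod ν) (s ×ˢ t)ᶜ = 0 := by
  have hsub : (s ×ˢ t)ᶜ ⊆ (sᶜ ×ˢ (univ : Set ℝ)) ∪ ((univ : Set ℝ) ×ˢ tᶜ) := by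
    intro q hq
    simp only [mem_compl_iff, mem_prod, not_and] at hq
    by_cases h1 : q.1 ∈ s
    · exact Or.inr ⟨mem_univ _, hq h1⟩
    · exact Or.inl ⟨h1, mem_univ _⟩
  refine le_antisymm (le_trans (measure_mono hsub) ?_) (zero_le)
  refine le_trans (measure_union_le _ _) ?_
  rw [Measure.prod_prod, Measure.prod_prod, hρ, hν]
  simp

/-- Product construction: measure on `[0,1]` whose moments are products of beta moments. -/
lemma exists_prod_measure (n : ℕ) (a b : ℕ → ℝ) (ha : ∀ j, 0 < a j) (hb : ∀ j, 0 < b j) :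
    ∃ ρ : Measure ℝ, IsProbabilityMeasure ρ ∧ ρ (Icc (0:ℝ) 1)ᶜ = 0 ∧
      ∀ k : ℕ, ∫ x, x ^ k ∂ρ =
        ∏ j ∈ Finset.range n, ∏ i ∈ Finset.range k, (a j + i) / (a j + b j + i) := by
  induction n with
  | zero =>
    refine ⟨Measure.dirac 1, by infer_instance, ?_, ?_⟩
    · rw [Measure.dirac_apply' _ (measurableSet_Icc.compl)]
      simp
    · intro k
      rw [integral_dirac]
      simp
  | succ n ih =>
    obtain ⟨ρ, hρprob, hρc, hρm⟩ := ih
    set ν := betaMeasure (a n) (b n) with hν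
    haveI := betaMeasure_prob (ha n) (hb n)
    haveI := hρprob
    have hmul : Measurable (fun q : ℝ × ℝ => q.1 * q.2) :=
      measurable_fst.mul measurable_snd
    refine ⟨(ρ.prod ν).map (fun q : ℝ × ℝ => q.1 * q.2),
      Measure.isProbabilityMeasure_map hmul.aemeasurable, ?_, ?_⟩
    · rw [Measure.map_apply hmul (measurableSet_Icc.compl)]
      have hsub : (fun q : ℝ × ℝ => q.1 * q.2) ⁻¹' (Icc (0:ℝ) 1)ᶜ
          ⊆ ((Icc (0:ℝ) 1) ×ˢ (Icc (0:ℝ) 1))ᶜ := by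
        intro q hq
        simp only [mem_preimage, mem_compl_iff] at hq ⊢
        intro hmem
        exact hq (mul_mem_Icc01 hmem.1 hmem.2)
      refine le_antisymm (le_trans (measure_mono hsub) ?_) (zero_le)
      rw [prod_compl_null measurableSet_Icc measurableSet_Icc hρc betaMeasure_compl]
    · intro k
      rw [integral_map hmul.aemeasurable (by fun_prop)]
      have : ∫ q : ℝ × ℝ, (q.1 * q.2) ^ k ∂(ρ.prod ν)
          = ∫ q : ℝ × ℝ, q.1 ^ k * q.2 ^ k ∂(ρ.prod ν) := by
        congr 1; ext q; rw [mul_pow]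
      rw [this, integral_prod_mul (f := fun x => x ^ k) (g := fun y => y ^ k), hρm k,
        Finset.prod_range_succ, betaMeasure_moment' (ha n) (hb n) k]

noncomputable def signMeasure : Measure ℝ :=
  (2:ENNReal)⁻¹ • (Measure.dirac (-1:ℝ) + Measure.dirac 1)

lemma integrable_dirac' {f : ℝ → ℝ} (hf : Measurable f) (x : ℝ) :
    Integrable f (Measure.dirac x) :=
  ⟨hf.aestronglyMeasurable, by
    rw [HasFiniteIntegral, lintegral_dirac]; exact ENNReal.coe_lt_top⟩

instance signMeasure_prob : IsProbabilityMeasure signMeasure := by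
  constructor
  rw [signMeasure, Measure.smul_apply, Measure.add_apply]
  simp [ENNReal.inv_mul_cancel, two_ne_zero]
  rw [one_add_one_eq_two, ENNReal.inv_mul_cancel two_ne_zero ENNReal.ofNat_ne_top]

lemma signMeasure_compl : signMeasure ({-1, 1} : Set ℝ)ᶜ = 0 := by
  rw [signMeasure, Measure.smul_apply, Measure.add_apply,
    Measure.dirac_apply' _ (by measurability), Measure.dirac_apply' _ (by measurability)]
  simp

lemma integral_signMeasure {f : ℝ → ℝ} (hf : Measurable f) :
    ∫ x, f x ∂signMeasure = (f (-1) + f 1) / 2 := by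
  rw [signMeasure, integral_smul_measure,
    integral_add_measure (integrable_dirac' hf _) (integrable_dirac' hf _),
    integral_dirac, integral_dirac]
  simp [ENNReal.toReal_inv]
  ring


lemma fact_prod (n m : ℕ) : ((n+m).factorial : ℝ)
    = (n.factorial : ℝ) * ∏ i ∈ Finset.range m, ((n:ℝ)+1+i) := by
  induction m with
  | zero => simp
  | succ m ih =>
    rw [show n + (m+1) = (n+m)+1 by ring, Nat.factorial_succ, Finset.prod_range_succ,
      Nat.cast_mul, ih]
    push_cast
    ring

lemma fussCatalan_eq (q k : ℕ) :
    fussCatalan (q+2) k = (((q+2)*k).factorial : ℝ)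
      / ((k.factorial : ℝ) * (((q+1)*k+1).factorial : ℝ)) := by
  have hle : k ≤ (q+2)*k+1 := by nlinarith
  have hsub : (q+2)*k+1 - k = (q+1)*k+1 := by
    have h : (q+2)*k = (q+1)*k + k := by ring
    omega
  rw [fussCatalan, Nat.cast_choose ℝ hle, hsub, Nat.factorial_succ ((q+2)*k)]
  have h1 : ((q:ℝ)+2)*k+1 ≠ 0 := by positivity
  have h1' : (((q+2)*k+1 : ℕ) : ℝ) ≠ 0 := by positivity
  field_simp
  push_cast
  ring

lemma fussCatalan_one (k : ℕ) : fussCatalan 1 k = 1 := by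
  rw [fussCatalan, one_mul, Nat.choose_succ_self_right]
  have : ((k:ℝ)+1) ≠ 0 := by positivity
  push_cast
  field_simp

lemma step_identity (q k : ℕ) :
    fussCatalan (q+2) (k+1) * ∏ j ∈ Finset.range (q+1), (((q:ℝ)+1)*k+j+2)
      = fussCatalan (q+2) k * ((q:ℝ)+2) * ∏ j ∈ Finset.range (q+1), (((q:ℝ)+2)*k+j+1) := by
  have e1 : ((q+2)*(k+1)) = ((q+2)*k) + (q+2) := by ring
  have e2 : ((q+1)*(k+1)+1) = ((q+1)*k+1) + (q+1) := by ring
  rw [fussCatalan_eq, fussCatalan_eq, e1, e2, fact_prod ((q+2)*k) (q+2),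
    fact_prod ((q+1)*k+1) (q+1), Nat.factorial_succ k]
  have hN : ∏ i ∈ Finset.range (q+2), ((((q+2)*k : ℕ):ℝ)+1+i)
      = (∏ i ∈ Finset.range (q+1), ((((q+2)*k : ℕ):ℝ)+1+i)) * (((q+2):ℝ)*(k+1)) := by
    rw [Finset.prod_range_succ]
    push_cast
    ring
  rw [hN]
  have hprod1 : ∏ i ∈ Finset.range (q+1), ((((q+2)*k : ℕ):ℝ)+1+i)
      = ∏ j ∈ Finset.range (q+1), (((q:ℝ)+2)*k+j+1) := by
    refine Finset.prod_congr rfl (fun i _ => ?_)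
    push_cast; ring
  have hprod2 : ∏ i ∈ Finset.range (q+1), ((((q+1)*k+1 : ℕ):ℝ)+1+i)
      = ∏ j ∈ Finset.range (q+1), (((q:ℝ)+1)*k+j+2) := by
    refine Finset.prod_congr rfl (fun i _ => ?_)
    push_cast; ring
  rw [hprod1, hprod2]
  have hD : (0:ℝ) < ∏ j ∈ Finset.range (q+1), (((q:ℝ)+1)*k+j+2) :=
    Finset.prod_pos (fun j _ => by positivity)
  have hf1 : ((k.factorial : ℝ)) ≠ 0 := by positivity
  have hf2 : ((((q+1)*k+1).factorial : ℝ)) ≠ 0 := by positivity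
  have hk1 : ((k:ℝ)+1) ≠ 0 := by positivity
  field_simp
  push_cast
  ring

lemma key_identity (q k : ℕ) :
    ((((q+2:ℕ)):ℝ)^(q+2) / ((((q+1)^(q+1):ℕ)):ℝ))^k *
      ∏ j ∈ Finset.range (q+1), ∏ i ∈ Finset.range k,
        ((((j:ℝ)+1)/((q:ℝ)+2)) + i) / ((((j:ℝ)+2)/((q:ℝ)+1)) + i)
    = fussCatalan (q+2) k := by
  have hq1 : ((q:ℝ)+1) ≠ 0 := by positivity
  have hq2 : ((q:ℝ)+2) ≠ 0 := by positivity
  induction k with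
  | zero =>
    simp [fussCatalan_eq]
  | succ k ih =>
    set c : ℝ := (((q+2:ℕ)):ℝ)^(q+2) / ((((q+1)^(q+1):ℕ)):ℝ) with hc
    set r : ℕ → ℕ → ℝ :=
      fun j i => ((((j:ℝ)+1)/((q:ℝ)+2)) + i) / ((((j:ℝ)+2)/((q:ℝ)+1)) + i) with hr
    set N : ℝ := ∏ j ∈ Finset.range (q+1), (((q:ℝ)+2)*k+j+1) with hN
    set D : ℝ := ∏ j ∈ Finset.range (q+1), (((q:ℝ)+1)*k+j+2) with hD
    have hNpos : 0 < N := Finset.prod_pos (fun j _ => by positivity)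
    have hDpos : 0 < D := Finset.prod_pos (fun j _ => by positivity)
    have expand : c^(k+1) * ∏ j ∈ Finset.range (q+1), ∏ i ∈ Finset.range (k+1), r j i
        = (c^k * ∏ j ∈ Finset.range (q+1), ∏ i ∈ Finset.range k, r j i)
          * (c * ∏ j ∈ Finset.range (q+1), r j k) := by
      rw [pow_succ,
        Finset.prod_congr rfl (fun j (_ : j ∈ Finset.range (q+1)) =>
          Finset.prod_range_succ (fun i => r j i) k),
        Finset.prod_mul_distrib]
      ring
    rw [expand, ih]
    have hprodA : (∏ j ∈ Finset.range (q+1), ((((j:ℝ)+1)/((q:ℝ)+2)) + k)) * ((q:ℝ)+2)^(q+1)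
        = N := by
      have hpow : ((q:ℝ)+2)^(q+1) = ∏ _j ∈ Finset.range (q+1), ((q:ℝ)+2) := by
        rw [Finset.prod_const, Finset.card_range]
      rw [hpow, ← Finset.prod_mul_distrib]
      refine Finset.prod_congr rfl (fun j _ => ?_)
      field_simp
      ring
    have hprodS : (∏ j ∈ Finset.range (q+1), ((((j:ℝ)+2)/((q:ℝ)+1)) + k)) * ((q:ℝ)+1)^(q+1)
        = D := by
      have hpow : ((q:ℝ)+1)^(q+1) = ∏ _j ∈ Finset.range (q+1), ((q:ℝ)+1) := by
        rw [Finset.prod_const, Finset.card_range]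
      rw [hpow, ← Finset.prod_mul_distrib]
      refine Finset.prod_congr rfl (fun j _ => ?_)
      field_simp
      ring
    have hprodR : ∏ j ∈ Finset.range (q+1), r j k
        = (∏ j ∈ Finset.range (q+1), ((((j:ℝ)+1)/((q:ℝ)+2)) + k))
          / (∏ j ∈ Finset.range (q+1), ((((j:ℝ)+2)/((q:ℝ)+1)) + k)) :=
      Finset.prod_div_distrib _ _
    have hcR : c * ∏ j ∈ Finset.range (q+1), r j k = ((q:ℝ)+2) * N / D := by
      have hSpos : 0 < ∏ j ∈ Finset.range (q+1), ((((j:ℝ)+2)/((q:ℝ)+1)) + k) :=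
        Finset.prod_pos (fun j _ => by positivity)
      rw [hprodR, hc]
      rw [← hprodA, ← hprodS]
      push_cast
      field_simp
      ring
    rw [hcR]
    have hstep := step_identity q k
    rw [← hN, ← hD] at hstep
    push_cast at hstep ⊢
    field_simp at hstep ⊢
    linear_combination -hstep

lemma exists_base_measure (p : ℕ) (hp : 1 ≤ p) :
    ∃ ρ : Measure ℝ, IsProbabilityMeasure ρ ∧ ρ (Icc (0:ℝ) 1)ᶜ = 0 ∧
      ∀ k : ℕ, ((p : ℝ) ^ p / (((p - 1) ^ (p - 1) : ℕ) : ℝ)) ^ k * ∫ x, x ^ k ∂ρ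
        = fussCatalan p k := by
  rcases Nat.lt_or_ge p 2 with h1 | h2
  · -- p = 1
    have hp1 : p = 1 := by omega
    subst hp1
    obtain ⟨ρ, h1, h2, h3⟩ := exists_prod_measure 0 (fun _ => 1) (fun _ => 1)
      (fun _ => one_pos) (fun _ => one_pos)
    refine ⟨ρ, h1, h2, fun k => ?_⟩
    rw [h3 k, fussCatalan_one]
    norm_num
  · obtain ⟨q, rfl⟩ : ∃ q, p = q + 2 := ⟨p - 2, by omega⟩
    set a : ℕ → ℝ := fun j => ((j:ℝ)+1)/((q:ℝ)+2) with ha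
    set b : ℕ → ℝ := fun j => ((j:ℝ)+2)/((q:ℝ)+1) - ((j:ℝ)+1)/((q:ℝ)+2) with hb
    have hapos : ∀ j, 0 < a j := fun j => by rw [ha]; positivity
    have hbpos : ∀ j, 0 < b j := by
      intro j
      have : b j = ((j:ℝ)+(q:ℝ)+3)/(((q:ℝ)+1)*((q:ℝ)+2)) := by
        rw [hb]
        field_simp
        ring
      rw [this]
      positivity
    obtain ⟨ρ, hρ1, hρ2, hρ3⟩ := exists_prod_measure (q+1) a b hapos hbpos
    refine ⟨ρ, hρ1, hρ2, fun k => ?_⟩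
    rw [hρ3 k]
    have hsub : q + 2 - 1 = q + 1 := rfl
    rw [hsub]
    have hab : ∀ j i : ℕ, (a j + i) / (a j + b j + i)
        = ((((j:ℝ)+1)/((q:ℝ)+2)) + i) / ((((j:ℝ)+2)/((q:ℝ)+1)) + i) := by
      intro j i
      rw [ha, hb]
      ring_nf
    have hcongr : ∀ j : ℕ, ∏ i ∈ Finset.range k, (a j + i) / (a j + b j + i)
        = ∏ i ∈ Finset.range k,
            ((((j:ℝ)+1)/((q:ℝ)+2)) + i) / ((((j:ℝ)+2)/((q:ℝ)+1)) + i) := fun j =>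
      Finset.prod_congr rfl (fun i _ => hab j i)
    rw [Finset.prod_congr rfl (fun j (_ : j ∈ Finset.range (q+1)) => hcongr j)]
    exact key_identity q k


/-- **Semicircular law of order `p`.** For every `p ≥ 1` there is a probability measure
on `ℝ` supported in `[-√(p^p/(p-1)^(p-1)), √(p^p/(p-1)^(p-1))]` (with `0^0 = 1` for
`p = 1`, via truncated subtraction) whose even moments are the Fuss–Catalan numbers and
whose odd moments vanish. -/
theorem stmt4 (p : ℕ) (hp : 1 ≤ p) :
    ∃ μ : Measure ℝ, IsProbabilityMeasure μ ∧
      μ (Set.Icc (-Real.sqrt ((p : ℝ) ^ p / ((p - 1 : ℕ) ^ (p - 1) : ℕ)))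
          (Real.sqrt ((p : ℝ) ^ p / ((p - 1 : ℕ) ^ (p - 1) : ℕ))))ᶜ = 0 ∧
      (∀ k : ℕ, ∫ x : ℝ, x ^ (2 * k) ∂μ = fussCatalan p k) ∧
      (∀ k : ℕ, ∫ x : ℝ, x ^ (2 * k + 1) ∂μ = 0) := by
  obtain ⟨ρ, hρ1, hρ2, hρ3⟩ := exists_base_measure p hp
  set c : ℝ := (p : ℝ) ^ p / (((p - 1) ^ (p - 1) : ℕ) : ℝ) with hc
  have hc0 : 0 ≤ c := by rw [hc]; positivity
  haveI := hρ1
  have hg : Measurable (fun q : ℝ × ℝ => q.1 * Real.sqrt (c * q.2)) :=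
    measurable_fst.mul (Real.continuous_sqrt.measurable.comp (measurable_const.mul measurable_snd))
  set π := signMeasure.prod ρ with hπ
  refine ⟨π.map (fun q : ℝ × ℝ => q.1 * Real.sqrt (c * q.2)),
    Measure.isProbabilityMeasure_map hg.aemeasurable, ?_, ?_, ?_⟩
  · rw [Measure.map_apply hg (measurableSet_Icc.compl)]
    have hsub : (fun q : ℝ × ℝ => q.1 * Real.sqrt (c * q.2)) ⁻¹'
        (Set.Icc (-Real.sqrt c) (Real.sqrt c))ᶜ
        ⊆ (({-1, 1} : Set ℝ) ×ˢ Icc (0:ℝ) 1)ᶜ := by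
      intro q hq
      simp only [mem_preimage, mem_compl_iff, mem_Icc, not_and_or, not_le] at hq
      rw [mem_compl_iff]
      intro hmem
      obtain ⟨hq1, hq2⟩ := mem_prod.1 hmem
      have hq1' : q.1 = -1 ∨ q.1 = 1 := by
        rcases Set.mem_insert_iff.1 hq1 with h | h
        · exact Or.inl h
        · exact Or.inr (Set.mem_singleton_iff.1 h)
      have h0 : 0 ≤ Real.sqrt (c * q.2) := Real.sqrt_nonneg _
      have hle : Real.sqrt (c * q.2) ≤ Real.sqrt c := by
        apply Real.sqrt_le_sqrt
        calc c * q.2 ≤ c * 1 := mul_le_mul_of_nonneg_left hq2.2 hc0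
        _ = c := mul_one c
      have hs0 : 0 ≤ Real.sqrt c := Real.sqrt_nonneg _
      have habs : |q.1 * Real.sqrt (c * q.2)| ≤ Real.sqrt c := by
        rw [abs_mul]
        have hone : |q.1| = 1 := by rcases hq1' with h | h <;> rw [h] <;> norm_num
        rw [hone, one_mul, abs_of_nonneg h0]
        exact hle
      rw [abs_le] at habs
      rcases hq with h' | h' <;> linarith [habs.1, habs.2]
    refine le_antisymm (le_trans (measure_mono hsub) ?_) (zero_le)
    rw [prod_compl_null (by measurability) measurableSet_Icc signMeasure_compl hρ2]
  · intro k
    rw [integral_map hg.aemeasurable (by fun_prop)]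
    simp only [mul_pow]
    rw [integral_prod_mul (f := fun x : ℝ => x^(2*k)) (g := fun y => (Real.sqrt (c*y))^(2*k))]
    have h1 : ∫ x, x^(2*k) ∂signMeasure = 1 := by
      rw [integral_signMeasure (f := fun x => x^(2*k)) (by fun_prop)]
      rw [pow_mul, pow_mul]
      norm_num
    have hae : ∀ᵐ y ∂ρ, y ∈ Icc (0:ℝ) 1 := by
      rw [ae_iff]
      exact hρ2
    have h2 : ∫ y, (Real.sqrt (c*y))^(2*k) ∂ρ = c^k * ∫ y, y^k ∂ρ := by
      rw [show (∫ y, (Real.sqrt (c*y))^(2*k) ∂ρ) = ∫ y, c^k * y^k ∂ρ from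
        integral_congr_ae (by
          filter_upwards [hae] with y hy
          rw [pow_mul, Real.sq_sqrt (mul_nonneg hc0 hy.1), mul_pow]),
        integral_const_mul (c^k) (fun y => y^k)]
    rw [h1, h2, one_mul]
    exact hρ3 k
  · intro k
    rw [integral_map hg.aemeasurable (by fun_prop)]
    simp only [mul_pow]
    rw [integral_prod_mul (f := fun x : ℝ => x^(2*k+1)) (g := fun y => (Real.sqrt (c*y))^(2*k+1))]
    have h1 : ∫ x, x^(2*k+1) ∂signMeasure = 0 := by
      rw [integral_signMeasure (f := fun x => x^(2*k+1)) (by fun_prop)]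
      rw [Odd.neg_one_pow ⟨k, by ring⟩, one_pow]
      norm_num
    rw [h1, zero_mul]
end

section
/- For all integers q ≥ 1 and k ≥ 1, the sum of the Fuss–Narayana numbers equals a Fuss–Catalan number: Σ_{b=1}^{k} (1/b)·(k−1 choose b−1)·(qk choose b−1) = (1/((q+1)k+1))·((q+1)k+1 choose k), as an identity of rational numbers. -/
lemma vand (k n : ℕ) (hk : 1 ≤ k) :
    ∑ b ∈ Finset.Icc 1 k, Nat.choose k b * Nat.choose n (b - 1) =
      Nat.choose (k + n) (k - 1) := by
  rw [Nat.add_choose_eq]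
  rw [Finset.Nat.sum_antidiagonal_eq_sum_range_succ (fun i j => Nat.choose k i * Nat.choose n j)]
  have hsk : (k - 1).succ = k := by omega
  rw [hsk]
  rw [← Finset.Ico_add_one_right_eq_Icc, Finset.sum_Ico_eq_sum_range]
  simp only [Nat.add_one_sub_one]
  rw [← Finset.sum_range_reflect (fun j => Nat.choose k j * Nat.choose n (k - 1 - j)) k]
  apply Finset.sum_congr rfl
  intro j hj
  simp only [Finset.mem_range] at hj
  have h1 : k - 1 - (k - 1 - j) = j := by omega
  have e : 1 + j - 1 = j := by omega
  rw [h1, e]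
  have h2 : k - 1 - j = k - (1 + j) := by omega
  rw [h2, Nat.choose_symm (by omega)]

/-- The sum of the Fuss–Narayana numbers `F_q^b(k)` over `b` equals the Fuss–Catalan
number `F_{q+1}(k)`, as an identity of rational numbers. -/
theorem stmt6 (q k : ℕ) (hq : 1 ≤ q) (hk : 1 ≤ k) :
    ∑ b ∈ Finset.Icc 1 k,
        (1 / (b : ℚ)) * (Nat.choose (k - 1) (b - 1) : ℚ) * (Nat.choose (q * k) (b - 1) : ℚ) =
      (1 / ((q + 1) * k + 1 : ℚ)) * (Nat.choose ((q + 1) * k + 1) k : ℚ) := by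
  have hk0 : (k : ℚ) ≠ 0 := Nat.cast_ne_zero.mpr (by omega)
  have step1 : ∑ b ∈ Finset.Icc 1 k,
      (1 / (b : ℚ)) * (Nat.choose (k - 1) (b - 1) : ℚ) * (Nat.choose (q * k) (b - 1) : ℚ) =
      (1 / (k : ℚ)) * ∑ b ∈ Finset.Icc 1 k,
        (Nat.choose k b : ℚ) * (Nat.choose (q * k) (b - 1) : ℚ) := by
    rw [Finset.mul_sum]
    apply Finset.sum_congr rfl
    intro b hb
    simp only [Finset.mem_Icc] at hb
    have hb0 : (b : ℚ) ≠ 0 := Nat.cast_ne_zero.mpr (by omega)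
    have key : k * Nat.choose (k - 1) (b - 1) = Nat.choose k b * b := by
      have := Nat.add_one_mul_choose_eq (k - 1) (b - 1)
      have e1 : (k - 1).succ = k := by omega
      have e2 : (b - 1).succ = b := by omega
      have e3 : k - 1 + 1 = k := by omega
      have e4 : b - 1 + 1 = b := by omega
      rw [e3, e4] at this
      exact this
    have keyQ : (k : ℚ) * (Nat.choose (k - 1) (b - 1) : ℚ) =
        (Nat.choose k b : ℚ) * b := by exact_mod_cast congrArg (Nat.cast : ℕ → ℚ) key
    field_simp
    nlinarith [keyQ]
  rw [step1]
  have step2 : ∑ b ∈ Finset.Icc 1 k,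
      (Nat.choose k b : ℚ) * (Nat.choose (q * k) (b - 1) : ℚ) =
      (Nat.choose (k + q * k) (k - 1) : ℚ) := by
    rw [← vand k (q * k) hk]
    push_cast
    rfl
  rw [step2]
  have hm0 : ((q + 1 : ℚ) * k + 1) ≠ 0 := by positivity
  have key2 : ((q + 1) * k + 1) * Nat.choose (k + q * k) (k - 1) =
      Nat.choose ((q + 1) * k + 1) k * k := by
    have := Nat.add_one_mul_choose_eq ((q + 1) * k) (k - 1)
    have e1 : (k - 1).succ = k := by omega
    have e2 : k - 1 + 1 = k := by omega
    have e3 : k + q * k = (q + 1) * k := by ring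
    rw [e2] at this
    have e4 : k + q * k = (q + 1) * k := by ring
    rw [e4]
    exact this
  have key2Q : (((q + 1) * k + 1 : ℕ) : ℚ) * (Nat.choose (k + q * k) (k - 1) : ℚ) =
      (Nat.choose ((q + 1) * k + 1) k : ℚ) * k := by exact_mod_cast congrArg (Nat.cast : ℕ → ℚ) key2
  push_cast at key2Q
  field_simp
  nlinarith [key2Q]
end

section
/- Let p = 2q be an even integer with q ≥ 1, let (κ_s)_{s≥1} be a real sequence, and let (m_n)_{n≥0} be the real sequence defined by m_0 = 1 and, for n ≥ 1, m_n = Σ_{s=1}^{n} κ_s · Σ_{(i_1,…,i_{sq}) ∈ ℕ^{sq}, i_1+…+i_{sq} = n−s} Π_{j=1}^{sq} m_{i_j}. If A ≥ 1 is such that |κ_s| ≤ A^s for all s ≥ 1, then |m_n| ≤ (2^p · A)^n for all n ≥ 1. -/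
open Finset

namespace Stmt9Aux

/-- Fuss–Catalan-like numbers for arity `T`. -/
def fc (T : ℕ) : ℕ → ℕ
  | 0 => 1
  | n + 1 => ∑ i ∈ (Finset.Nat.antidiagonalTuple T n).attach, ∏ j, fc T (i.1 j)
termination_by n => n
decreasing_by
  have h := Finset.Nat.mem_antidiagonalTuple.mp i.2
  have : i.1 j ≤ ∑ j', i.1 j' :=
    Finset.single_le_sum (fun _ _ => Nat.zero_le _) (Finset.mem_univ j)
  omega

/-- partial sums `[x^m] F^k`. -/
def S (T k m : ℕ) : ℕ := ∑ i ∈ Finset.Nat.antidiagonalTuple k m, ∏ j, fc T (i j)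

lemma fc_zero (T : ℕ) : fc T 0 = 1 := by rw [fc]

lemma fc_succ (T n : ℕ) : fc T (n + 1) = S T T n := by
  rw [fc, S]
  exact Finset.sum_attach _ (fun i : Fin T → ℕ => ∏ j, fc T (i j))

end Stmt9Aux

namespace Stmt9Aux

lemma S_peel (T k n : ℕ) :
    S T (k + 1) n = ∑ ab ∈ (Finset.HasAntidiagonal.antidiagonal n : Finset (ℕ × ℕ)), fc T ab.1 * S T k ab.2 := by
  simp only [S, Finset.mul_sum, Finset.sum_sigma']
  refine Finset.sum_nbij'
    (i := fun (y : Fin (k+1) → ℕ) =>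
      (⟨(y 0, ∑ j, Fin.tail y j), Fin.tail y⟩ : Σ _ : ℕ × ℕ, Fin k → ℕ))
    (j := fun x => Fin.cons x.1.1 x.2) ?_ ?_ ?_ ?_ ?_
  · intro y hy
    rw [Finset.Nat.mem_antidiagonalTuple] at hy
    rw [Finset.mem_sigma, Finset.HasAntidiagonal.mem_antidiagonal, Finset.Nat.mem_antidiagonalTuple]
    refine ⟨?_, rfl⟩
    rw [← hy, Fin.sum_univ_succ]
    rfl
  · intro x hx
    rw [Finset.mem_sigma, Finset.HasAntidiagonal.mem_antidiagonal, Finset.Nat.mem_antidiagonalTuple] at hx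
    rw [Finset.Nat.mem_antidiagonalTuple, Fin.sum_cons, hx.2, hx.1]
  · intro y _
    exact Fin.cons_self_tail y
  · intro x hx
    rw [Finset.mem_sigma, Finset.HasAntidiagonal.mem_antidiagonal, Finset.Nat.mem_antidiagonalTuple] at hx
    obtain ⟨⟨a, b⟩, f⟩ := x
    simp only [Fin.cons_zero, Fin.tail_cons]
    simp only at hx
    rw [hx.2]
  · intro y _
    rw [Fin.prod_univ_succ]
    rfl

end Stmt9Aux

namespace Stmt9Aux

lemma S_split (T k₁ k₂ n : ℕ) :
    S T (k₁ + k₂) n = ∑ ab ∈ (Finset.HasAntidiagonal.antidiagonal n : Finset (ℕ × ℕ)),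
      S T k₁ ab.1 * S T k₂ ab.2 := by
  simp only [S, Finset.sum_mul_sum, ← Finset.sum_product', Finset.sum_sigma']
  refine Finset.sum_nbij'
    (i := fun (y : Fin (k₁ + k₂) → ℕ) =>
      (⟨(∑ j, y (Fin.castAdd k₂ j), ∑ j, y (Fin.natAdd k₁ j)),
        (fun j => y (Fin.castAdd k₂ j), fun j => y (Fin.natAdd k₁ j))⟩ :
        Σ _ : ℕ × ℕ, (Fin k₁ → ℕ) × (Fin k₂ → ℕ)))
    (j := fun x => Fin.append x.2.1 x.2.2) ?_ ?_ ?_ ?_ ?_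
  · intro y hy
    rw [Finset.Nat.mem_antidiagonalTuple] at hy
    rw [Finset.mem_sigma, Finset.HasAntidiagonal.mem_antidiagonal, Finset.mem_product,
      Finset.Nat.mem_antidiagonalTuple, Finset.Nat.mem_antidiagonalTuple]
    exact ⟨by rw [← hy, Fin.sum_univ_add], rfl, rfl⟩
  · intro x hx
    rw [Finset.mem_sigma, Finset.HasAntidiagonal.mem_antidiagonal, Finset.mem_product,
      Finset.Nat.mem_antidiagonalTuple, Finset.Nat.mem_antidiagonalTuple] at hx
    rw [Finset.Nat.mem_antidiagonalTuple]
    rw [Fin.sum_univ_add]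
    simp only [Fin.append_left, Fin.append_right]
    rw [hx.2.1, hx.2.2, hx.1]
  · intro y _
    exact Fin.append_castAdd_natAdd
  · intro x hx
    rw [Finset.mem_sigma, Finset.HasAntidiagonal.mem_antidiagonal, Finset.mem_product,
      Finset.Nat.mem_antidiagonalTuple, Finset.Nat.mem_antidiagonalTuple] at hx
    obtain ⟨⟨a, b⟩, u, v⟩ := x
    simp only [Fin.append_left, Fin.append_right]
    simp only at hx
    rw [hx.2.1, hx.2.2]
  · intro y _
    rw [Fin.prod_univ_add]

end Stmt9Aux

namespace Stmt9Aux

lemma S_zero_right (T k : ℕ) : S T k 0 = 1 := by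
  rw [S, Finset.Nat.antidiagonalTuple_zero_right, Finset.sum_singleton]
  simp [fc_zero]

lemma S_zero_left_succ (T m : ℕ) : S T 0 (m + 1) = 0 := by
  rw [S, Finset.Nat.antidiagonalTuple_zero_succ, Finset.sum_empty]

lemma S_one (T m : ℕ) : S T 1 m = fc T m := by
  rw [S, Finset.Nat.antidiagonalTuple_one, Finset.sum_singleton, Fin.prod_univ_one]
  rfl

lemma S_pascal (T k m : ℕ) : S T (k + 1) (m + 1) = S T k (m + 1) + S T (T + k) m := by
  have h1 : S T (1 + k) (m + 1) = ∑ ab ∈ (Finset.HasAntidiagonal.antidiagonal (m+1) : Finset (ℕ × ℕ)),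
      fc T ab.1 * S T k ab.2 := by
    rw [S_split]
    simp only [S_one]
  rw [add_comm k 1, h1, Finset.Nat.sum_antidiagonal_succ]
  simp only [fc_zero, one_mul, fc_succ]
  rw [← S_split]

lemma S_mono (T k j m : ℕ) : S T k m ≤ S T (k + j) m := by
  induction j with
  | zero => exact le_rfl
  | succ j ih =>
    refine ih.trans ?_
    have h : S T (k + j + 1) m = ∑ ab ∈ (Finset.HasAntidiagonal.antidiagonal m : Finset (ℕ × ℕ)),
        S T (k + j) ab.1 * S T 1 ab.2 := S_split T (k + j) 1 m
    have hmem : (m, 0) ∈ (Finset.HasAntidiagonal.antidiagonal m : Finset (ℕ × ℕ)) := by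
      simp [Finset.HasAntidiagonal.mem_antidiagonal]
    calc S T (k + j) m = S T (k + j) m * S T 1 0 := by rw [S_one, fc_zero, mul_one]
      _ ≤ _ := by
          rw [show k + (j+1) = k + j + 1 by ring, h]
          exact Finset.single_le_sum (f := fun ab => S T (k+j) ab.1 * S T 1 ab.2)
            (fun _ _ => Nat.zero_le _) hmem

lemma choose_le_two_pow (a b : ℕ) : Nat.choose a b ≤ 2 ^ a := by
  rcases le_or_gt b a with h | h
  · calc Nat.choose a b ≤ ∑ i ∈ Finset.range (a + 1), Nat.choose a i :=
        Finset.single_le_sum (fun _ _ => Nat.zero_le _)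
          (Finset.mem_range.mpr (Nat.lt_succ_of_le h))
      _ = 2 ^ a := Nat.sum_range_choose a
  · rw [Nat.choose_eq_zero_of_lt h]; exact Nat.zero_le _

lemma S_le_choose (T : ℕ) (hT : 1 ≤ T) : ∀ m k : ℕ, S T (k + 1) m ≤ Nat.choose (T * m + k) m := by
  intro m
  induction m with
  | zero => intro k; rw [S_zero_right]; simp
  | succ m ihm =>
    intro k
    induction k with
    | zero =>
      obtain ⟨T', rfl⟩ : ∃ T', T = T' + 1 := ⟨T - 1, by omega⟩
      rw [S_one, fc_succ]
      calc S (T'+1) (T'+1) m ≤ Nat.choose ((T'+1) * m + T') m := ihm T'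
        _ ≤ Nat.choose ((T'+1) * (m+1) + 0) (m+1) := by
            have h3 : (T'+1) * (m+1) + 0 = ((T'+1) * m + T') + 1 := by ring
            rw [h3, Nat.choose_succ_succ]
            exact Nat.le_add_right _ _
    | succ k ihk =>
      rw [S_pascal]
      have h2 : S T (T + (k + 1)) m ≤ Nat.choose (T * m + (T + k)) m := by
        have := ihm (T + k)
        rwa [Nat.add_assoc] at this
      calc S T (k+1) (m+1) + S T (T + (k+1)) m
          ≤ Nat.choose (T * (m+1) + k) (m+1) + Nat.choose (T * m + (T + k)) m :=
            Nat.add_le_add ihk h2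
        _ = Nat.choose (T * (m+1) + k) (m+1) + Nat.choose (T * (m+1) + k) m := by
            rw [show T * (m+1) + k = T * m + (T + k) by ring]
        _ = Nat.choose (T * (m+1) + (k+1)) (m+1) := by
            rw [show T * (m+1) + (k+1) = (T * (m+1) + k) + 1 by ring,
              Nat.choose_succ_succ, Nat.add_comm]

end Stmt9Aux

namespace Stmt9Aux

lemma fc_le_two_pow (T : ℕ) (hT : 1 ≤ T) (n : ℕ) : fc T n ≤ 2 ^ (T * n) := by
  cases n with
  | zero => simp [fc_zero]
  | succ n =>
    obtain ⟨T', rfl⟩ : ∃ T', T = T' + 1 := ⟨T - 1, by omega⟩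
    rw [fc_succ]
    calc S (T'+1) (T'+1) n ≤ Nat.choose ((T'+1) * n + T') n := S_le_choose _ hT n T'
      _ ≤ 2 ^ ((T'+1) * n + T') := choose_le_two_pow _ _
      _ ≤ 2 ^ ((T'+1) * (n+1)) := Nat.pow_le_pow_right (by norm_num) (by ring_nf; omega)

lemma Icc_sum_eq (g : ℕ → ℕ) (n : ℕ) :
    ∑ s ∈ Finset.Icc 1 n, g s = ∑ t ∈ Finset.range n, g (t + 1) := by
  rw [← Finset.Ico_add_one_right_eq_Icc, Finset.sum_Ico_eq_sum_range]
  exact Finset.sum_congr rfl fun t _ => by rw [add_comm]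

lemma swap_sum (F : ℕ → ℕ → ℕ → ℕ) (N : ℕ) :
    ∑ t ∈ Finset.range (N + 1),
        ∑ ab ∈ (Finset.HasAntidiagonal.antidiagonal (N - t) : Finset (ℕ × ℕ)), F t ab.1 ab.2
      = ∑ ac ∈ (Finset.HasAntidiagonal.antidiagonal N : Finset (ℕ × ℕ)),
          ∑ t ∈ Finset.range (ac.2 + 1), F t ac.1 (ac.2 - t) := by
  simp only [Finset.sum_sigma']
  refine Finset.sum_nbij'
    (i := fun x => (⟨(x.2.1, x.1 + x.2.2), x.1⟩ : Σ _ : ℕ × ℕ, ℕ))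
    (j := fun y => (⟨y.2, (y.1.1, y.1.2 - y.2)⟩ : Σ _ : ℕ, ℕ × ℕ)) ?_ ?_ ?_ ?_ ?_
  · rintro ⟨t, a, b⟩ hx
    simp only [Finset.mem_sigma, Finset.mem_range, Finset.HasAntidiagonal.mem_antidiagonal] at hx ⊢
    omega
  · rintro ⟨⟨a, c⟩, t⟩ hy
    simp only [Finset.mem_sigma, Finset.mem_range, Finset.HasAntidiagonal.mem_antidiagonal] at hy ⊢
    omega
  · rintro ⟨t, a, b⟩ hx
    simp only [Finset.mem_sigma, Finset.mem_range, Finset.HasAntidiagonal.mem_antidiagonal] at hx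
    show (⟨t, (a, t + b - t)⟩ : Σ _ : ℕ, ℕ × ℕ) = ⟨t, (a, b)⟩
    have h : t + b - t = b := by omega
    rw [h]
  · rintro ⟨⟨a, c⟩, t⟩ hy
    simp only [Finset.mem_sigma, Finset.mem_range, Finset.HasAntidiagonal.mem_antidiagonal] at hy
    show (⟨(a, t + (c - t)), t⟩ : Σ _ : ℕ × ℕ, ℕ) = ⟨(a, c), t⟩
    have h : t + (c - t) = c := by omega
    rw [h]
  · rintro ⟨t, a, b⟩ hx
    simp only [Finset.mem_sigma, Finset.mem_range, Finset.HasAntidiagonal.mem_antidiagonal] at hx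
    simp only [Nat.add_sub_cancel_left]

lemma U_le_fc (q : ℕ) (hq : 1 ≤ q) :
    ∀ n : ℕ, (∑ s ∈ Finset.Icc 1 n, S (q + q) (s * q) (n - s)) ≤ fc (q + q) n := by
  intro n
  induction n using Nat.strong_induction_on with
  | _ n IH =>
    cases n with
    | zero => simp [fc_zero]
    | succ N =>
      rw [Icc_sum_eq]
      have step1 : ∀ t ∈ Finset.range (N + 1),
          S (q+q) ((t+1) * q) (N + 1 - (t+1))
            = ∑ ab ∈ (Finset.HasAntidiagonal.antidiagonal (N - t) : Finset (ℕ × ℕ)),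
                S (q+q) q ab.1 * S (q+q) (t * q) ab.2 := by
        intro t _
        rw [show (t+1) * q = q + t * q by ring, show N + 1 - (t+1) = N - t by omega]
        exact S_split (q+q) q (t*q) (N - t)
      rw [Finset.sum_congr rfl step1, swap_sum (fun t a b => S (q+q) q a * S (q+q) (t*q) b) N]
      have step2 : ∀ ac ∈ (Finset.HasAntidiagonal.antidiagonal N : Finset (ℕ × ℕ)),
          (∑ t ∈ Finset.range (ac.2 + 1), S (q+q) q ac.1 * S (q+q) (t * q) (ac.2 - t))
            ≤ S (q+q) q ac.1 * fc (q+q) ac.2 := by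
        rintro ⟨a, c⟩ hac
        rw [Finset.HasAntidiagonal.mem_antidiagonal] at hac
        simp only [← Finset.mul_sum]
        refine Nat.mul_le_mul_left _ ?_
        rw [Finset.sum_range_succ']
        cases c with
        | zero => simp [S_zero_right, fc_zero]
        | succ c' =>
          rw [← Icc_sum_eq (fun s => S (q+q) (s * q) (c' + 1 - s)) (c' + 1),
            Nat.zero_mul, Nat.sub_zero, S_zero_left_succ, Nat.add_zero]
          exact IH (c' + 1) (by omega)
      calc _ ≤ ∑ ac ∈ (Finset.HasAntidiagonal.antidiagonal N : Finset (ℕ × ℕ)),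
            S (q+q) q ac.1 * fc (q+q) ac.2 := Finset.sum_le_sum step2
        _ = S (q+q) (q + 1) N := by
            rw [S_split (q+q) q 1 N]
            exact Finset.sum_congr rfl fun ab _ => by rw [S_one]
        _ ≤ S (q+q) (q + 1 + (q - 1)) N := S_mono _ _ _ _
        _ = fc (q+q) (N + 1) := by
            rw [show q + 1 + (q - 1) = q + q by omega, fc_succ]

end Stmt9Aux



/-- Quantitative forward bound: if the free cumulants satisfy `|κ_s| ≤ A^s` with `A ≥ 1`,
then the moments defined by the moment–cumulant recursion (with `p = 2q`, `q ≥ 1`)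
satisfy `|m_n| ≤ (2^p · A)^n`. -/
theorem stmt9 (q : ℕ) (hq : 1 ≤ q) (κ m : ℕ → ℝ)
    (hm0 : m 0 = 1)
    (hrec : ∀ n : ℕ, 1 ≤ n →
      m n = ∑ s ∈ Finset.Icc 1 n, κ s *
        ∑ i ∈ Finset.Nat.antidiagonalTuple (s * q) (n - s), ∏ j, m (i j))
    (A : ℝ) (hA : 1 ≤ A) (hκ : ∀ s : ℕ, 1 ≤ s → |κ s| ≤ A ^ s) :
    ∀ n : ℕ, 1 ≤ n → |m n| ≤ ((2 : ℝ) ^ (2 * q) * A) ^ n := by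
  have hA0 : (0:ℝ) ≤ A := le_trans zero_le_one hA
  have key : ∀ n : ℕ, |m n| ≤ A ^ n * ((Stmt9Aux.fc (q + q) n : ℕ) : ℝ) := by
    intro n
    induction n using Nat.strong_induction_on with
    | _ n IH =>
      match n with
      | 0 => rw [hm0, Stmt9Aux.fc_zero]; simp
      | N + 1 =>
        rw [hrec (N + 1) (by omega)]
        have inner : ∀ s ∈ Finset.Icc 1 (N + 1),
            |κ s * ∑ i ∈ Finset.Nat.antidiagonalTuple (s * q) (N + 1 - s), ∏ j, m (i j)|
              ≤ A ^ (N + 1) * ((Stmt9Aux.S (q+q) (s * q) (N + 1 - s) : ℕ) : ℝ) := by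
          intro s hs
          rw [Finset.mem_Icc] at hs
          rw [abs_mul]
          have hsum : |∑ i ∈ Finset.Nat.antidiagonalTuple (s * q) (N + 1 - s), ∏ j, m (i j)|
              ≤ A ^ (N + 1 - s) * ((Stmt9Aux.S (q+q) (s * q) (N + 1 - s) : ℕ) : ℝ) := by
            refine (Finset.abs_sum_le_sum_abs _ _).trans ?_
            have hterm : ∀ i ∈ Finset.Nat.antidiagonalTuple (s * q) (N + 1 - s),
                |∏ j, m (i j)| ≤ A ^ (N + 1 - s) *
                  ∏ j, ((Stmt9Aux.fc (q + q) (i j) : ℕ) : ℝ) := by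
              intro i hi
              rw [Finset.Nat.mem_antidiagonalTuple] at hi
              rw [abs_prod]
              have step : ∀ j, |m (i j)| ≤ A ^ (i j) * ((Stmt9Aux.fc (q+q) (i j) : ℕ) : ℝ) := by
                intro j
                refine IH (i j) ?_
                have : i j ≤ ∑ j', i j' :=
                  Finset.single_le_sum (fun _ _ => Nat.zero_le _) (Finset.mem_univ j)
                omega
              calc ∏ j, |m (i j)|
                  ≤ ∏ j, (A ^ (i j) * ((Stmt9Aux.fc (q+q) (i j) : ℕ) : ℝ)) :=
                    Finset.prod_le_prod (fun _ _ => abs_nonneg _) (fun j _ => step j)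
                _ = (∏ j, A ^ (i j)) * ∏ j, ((Stmt9Aux.fc (q+q) (i j) : ℕ) : ℝ) :=
                    Finset.prod_mul_distrib
                _ = A ^ (N + 1 - s) * ∏ j, ((Stmt9Aux.fc (q+q) (i j) : ℕ) : ℝ) := by
                    rw [Finset.prod_pow_eq_pow_sum, hi]
            refine (Finset.sum_le_sum hterm).trans ?_
            rw [← Finset.mul_sum]
            refine mul_le_mul_of_nonneg_left ?_ (pow_nonneg hA0 _)
            rw [Stmt9Aux.S]
            push_cast
            exact le_rfl
          calc |κ s| * |∑ i ∈ Finset.Nat.antidiagonalTuple (s * q) (N + 1 - s), ∏ j, m (i j)|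
              ≤ A ^ s * (A ^ (N + 1 - s) * ((Stmt9Aux.S (q+q) (s * q) (N + 1 - s) : ℕ) : ℝ)) :=
                mul_le_mul (hκ s hs.1) hsum (abs_nonneg _)
                  (pow_nonneg hA0 _)
            _ = A ^ (N + 1) * ((Stmt9Aux.S (q+q) (s * q) (N + 1 - s) : ℕ) : ℝ) := by
                rw [← mul_assoc, ← pow_add, show s + (N + 1 - s) = N + 1 by omega]
        calc |∑ s ∈ Finset.Icc 1 (N+1), κ s *
                ∑ i ∈ Finset.Nat.antidiagonalTuple (s * q) (N + 1 - s), ∏ j, m (i j)|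
            ≤ ∑ s ∈ Finset.Icc 1 (N+1), |κ s *
                ∑ i ∈ Finset.Nat.antidiagonalTuple (s * q) (N + 1 - s), ∏ j, m (i j)| :=
              Finset.abs_sum_le_sum_abs _ _
          _ ≤ ∑ s ∈ Finset.Icc 1 (N+1),
                A ^ (N + 1) * ((Stmt9Aux.S (q+q) (s * q) (N + 1 - s) : ℕ) : ℝ) :=
              Finset.sum_le_sum inner
          _ = A ^ (N + 1) *
                ((∑ s ∈ Finset.Icc 1 (N+1), Stmt9Aux.S (q+q) (s * q) (N + 1 - s) : ℕ) : ℝ) := by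
              rw [← Finset.mul_sum]
              push_cast
              ring
          _ ≤ A ^ (N + 1) * ((Stmt9Aux.fc (q + q) (N + 1) : ℕ) : ℝ) := by
              refine mul_le_mul_of_nonneg_left ?_ (pow_nonneg hA0 _)
              exact_mod_cast Stmt9Aux.U_le_fc q hq (N + 1)
  intro n _
  calc |m n| ≤ A ^ n * ((Stmt9Aux.fc (q + q) n : ℕ) : ℝ) := key n
    _ ≤ A ^ n * ((2 ^ ((q + q) * n) : ℕ) : ℝ) := by
        refine mul_le_mul_of_nonneg_left ?_ (pow_nonneg hA0 _)
        exact_mod_cast Stmt9Aux.fc_le_two_pow (q + q) (by omega) n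
    _ = ((2 : ℝ) ^ (2 * q) * A) ^ n := by
        push_cast
        rw [mul_pow, ← pow_mul, show 2 * q * n = (q + q) * n by ring]
        ring
end

section
/- Let p ≥ 1 be an integer. If M ∈ ℝ⟦X⟧ is a formal power series satisfying M = 1 + 2X²·M^p, then for every k ≥ 0 the coefficient of X^{2k} in M equals 2^k · F_p(k), where F_p(k) = (1/(pk+1))·(pk+1 choose k) is the Fuss–Catalan number, and every odd-degree coefficient of M is zero. -/
noncomputable def raney (p r k : ℕ) : ℝ :=
  (r : ℝ) / (p * k + r : ℝ) * (Nat.choose (p * k + r) k : ℝ)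

lemma raney_zero_left (p k : ℕ) : raney p 0 k = 0 := by simp [raney]

lemma raney_zero_right (p r : ℕ) (hr : 1 ≤ r) : raney p r 0 = 1 := by
  have h : (r : ℝ) ≠ 0 := by exact_mod_cast Nat.one_le_iff_ne_zero.mp hr
  simp [raney, h]

lemma raney_rec (p r k : ℕ) (hp : 1 ≤ p) (hk : 1 ≤ k) :
    raney p (r + 1) k = raney p r k + raney p (p + r) (k - 1) := by
  obtain ⟨k', rfl⟩ : ∃ k', k = k' + 1 := ⟨k - 1, by omega⟩
  have e1 : p * (k' + 1) + (r + 1) = (p * (k' + 1) + r) + 1 := by ring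
  have e2 : p * (k' + 1 - 1) + (p + r) = p * (k' + 1) + r := by
    simp only [Nat.add_sub_cancel]; ring
  have hkn : k' + 1 ≤ p * (k' + 1) + r := by nlinarith
  unfold raney
  rw [e1, e2]
  simp only [Nat.add_sub_cancel]
  set n := p * (k' + 1) + r with hn
  have hnpos : 0 < n := by omega
  have hnne : (n : ℝ) ≠ 0 := by positivity
  have hn1ne : (n : ℝ) + 1 ≠ 0 := by positivity
  have hpascal : (Nat.choose (n + 1) (k' + 1) : ℝ) =
      Nat.choose n k' + Nat.choose n (k' + 1) := by
    exact_mod_cast congrArg (Nat.cast (R := ℝ)) (Nat.choose_succ_succ n k')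
  have hkey : (Nat.choose n (k' + 1) : ℝ) * (k' + 1) =
      (Nat.choose n k' : ℝ) * ((n : ℝ) - k') := by
    have h := Nat.choose_succ_right_eq n k'
    have h2 : ((Nat.choose n (k' + 1) : ℕ) : ℝ) * ((k' + 1 : ℕ) : ℝ)
        = ((Nat.choose n k' : ℕ) : ℝ) * (((n - k' : ℕ) : ℕ) : ℝ) := by
      exact_mod_cast congrArg (Nat.cast (R := ℝ)) h
    rw [Nat.cast_sub (by omega)] at h2
    push_cast at h2 ⊢
    linarith
  have hnr : (n : ℝ) = p * (k' + 1) + r := by rw [hn]; push_cast; ring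
  push_cast
  rw [show ((p : ℝ) * (k' + 1) + (r + 1)) = (n : ℝ) + 1 by rw [hnr]; ring,
      show ((p : ℝ) * (k' + 1) + r) = (n : ℝ) by rw [hnr],
      show ((p : ℝ) * k' + ((p : ℝ) + r)) = (n : ℝ) by rw [hnr]; ring]
  rw [div_mul_eq_mul_div, div_mul_eq_mul_div, div_mul_eq_mul_div, ← add_div,
      div_eq_div_iff hn1ne hnne]
  push_cast
  linear_combination ((r : ℝ) + 1) * (n : ℝ) * hpascal + (p : ℝ) * hkey
    + ((Nat.choose n k' : ℝ) + (Nat.choose n (k' + 1) : ℝ)) * hnr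

lemma coeff_two_mul (n : ℕ) (f : PowerSeries ℝ) :
    PowerSeries.coeff (R := ℝ) n (2 * f) = 2 * PowerSeries.coeff (R := ℝ) n f := by
  rw [two_mul, map_add, two_mul]

lemma key (p : ℕ) (hp : 1 ≤ p) (M : PowerSeries ℝ)
    (hM : M = 1 + 2 * PowerSeries.X ^ 2 * M ^ p) :
    ∀ n r : ℕ, PowerSeries.coeff (R := ℝ) n (M ^ r) =
      if n = 0 then 1 else if Even n then 2 ^ (n / 2) * raney p r (n / 2) else 0 := by
  have hc : PowerSeries.constantCoeff (R := ℝ) M = 1 := by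
    rw [hM]; simp
  intro n
  induction n using Nat.strong_induction_on with
  | _ n ih =>
    intro r
    rcases eq_or_ne n 0 with rfl | hn0
    · simp [PowerSeries.coeff_zero_eq_constantCoeff, map_pow, hc]
    · induction r with
      | zero =>
        simp [hn0, PowerSeries.coeff_one, raney_zero_left]
      | succ r ihr =>
        have h1 : M ^ (r + 1) = M ^ r + (2 * M ^ (p + r)) * PowerSeries.X ^ 2 := by
          have h2 : M ^ (r + 1) = M * M ^ r := pow_succ' M r
          rw [h2]
          nth_rewrite 1 [hM]
          ring
        rw [h1, map_add, PowerSeries.coeff_mul_X_pow', ihr]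
        rcases lt_or_ge n 2 with hlt | hge
        · -- n = 1
          have hn1 : n = 1 := by omega
          subst hn1
          norm_num
        · rw [if_pos hge, coeff_two_mul, ih (n - 2) (by omega) (p + r)]
          rcases Nat.even_or_odd n with he | ho
          · obtain ⟨k, hk⟩ := id he
            have hk1 : 1 ≤ k := by omega
            have hnd : n / 2 = k := by omega
            have hnd2 : (n - 2) / 2 = k - 1 := by omega
            have he2 : Even (n - 2) := ⟨k - 1, by omega⟩
            simp only [if_neg hn0, if_pos he, if_pos he2, hnd, hnd2]
            rcases eq_or_ne (n - 2) 0 with h20 | h2ne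
            · have hkk : k = 1 := by omega
              subst hkk
              rw [if_pos h20, raney_rec p r 1 hp le_rfl,
                raney_zero_right p (p + r) (by omega)]
              ring
            · rw [if_neg h2ne, raney_rec p r k hp hk1]
              have hpow : (2 : ℝ) * 2 ^ (k - 1) = 2 ^ k := by
                conv_rhs => rw [show k = (k - 1) + 1 by omega]
                rw [pow_succ]
                ring
              linear_combination raney p (p + r) (k - 1) * hpow
          · have hne : ¬ Even n := Nat.not_even_iff_odd.mpr ho
            have h2ne : n - 2 ≠ 0 := by
              rcases ho with ⟨m, hm⟩
              omega
            have hne2 : ¬ Even (n - 2) := by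
              rcases ho with ⟨m, hm⟩
              intro ⟨l, hl⟩
              omega
            simp only [if_neg hn0, if_neg hne, if_neg h2ne, if_neg hne2]
            ring

/-- If `M ∈ ℝ⟦X⟧` satisfies `M = 1 + 2X² M^p` with `p ≥ 1` (moment series of the free
convolution of two order-`p` semicirculars), then the coefficient of `X^(2k)` in `M`
equals `2^k · F_p(k)` and all odd coefficients vanish. -/
theorem stmt11 (p : ℕ) (hp : 1 ≤ p) (M : PowerSeries ℝ)
    (hM : M = 1 + 2 * PowerSeries.X ^ 2 * M ^ p) :
    (∀ k : ℕ, (PowerSeries.coeff (R := ℝ) (2 * k)) M = 2 ^ k * fussCatalan p k) ∧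
      (∀ k : ℕ, (PowerSeries.coeff (R := ℝ) (2 * k + 1)) M = 0) := by
  have hkey := key p hp M hM
  have hrf : ∀ k : ℕ, raney p 1 k = fussCatalan p k := by
    intro k
    simp [raney, fussCatalan, one_div]
  constructor
  · intro k
    have h := hkey (2 * k) 1
    rw [pow_one] at h
    rcases eq_or_ne k 0 with rfl | hk
    · simp only [Nat.mul_zero, if_pos rfl] at h
      rw [h]
      simp [fussCatalan]
    · have h0 : 2 * k ≠ 0 := by omega
      have heven : Even (2 * k) := ⟨k, by omega⟩
      have hdiv : 2 * k / 2 = k := by omega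
      rw [if_neg h0, if_pos heven, hdiv, hrf] at h
      exact h
  · intro k
    have h := hkey (2 * k + 1) 1
    rw [pow_one] at h
    have h0 : 2 * k + 1 ≠ 0 := by omega
    have hodd : ¬ Even (2 * k + 1) := by
      intro ⟨l, hl⟩
      omega
    rw [if_neg h0, if_neg hodd] at h
    exact h
end

section
/- Let p ≥ 1 be an integer. Suppose μ is a compactly supported probability measure on ℝ with ∫ x^{2k} dμ(x) = F_{p+1}(k) and ∫ x^{2k+1} dμ(x) = 0 for all k ≥ 0, and suppose ν is a compactly supported probability measure on ℝ with ∫ x^n dν(x) = Σ_{b=1}^{n} F_p^b(n) for all n ≥ 1. Then ν equals the pushforward of μ under the map x ↦ x². -/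
open MeasureTheory

open BoundedContinuousFunction

lemma natkey (p n : ℕ) (hn : 1 ≤ n) :
    ∑ b ∈ Finset.Icc 1 n, Nat.choose n b * Nat.choose (p * n) (b - 1)
      = Nat.choose (p * n + n) (n - 1) := by
  rw [Nat.add_choose_eq, Finset.Nat.sum_antidiagonal_eq_sum_range_succ_mk]
  have hr : (n - 1).succ = n := by omega
  rw [hr, ← Finset.Ico_add_one_right_eq_Icc, Finset.sum_Ico_eq_sum_range]
  simp only [Nat.add_sub_cancel]
  refine Finset.sum_congr rfl fun i hi => ?_
  rw [Finset.mem_range] at hi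
  have h1 : 1 + i - 1 = i := by omega
  have h2 : n - 1 - i = n - (1 + i) := by omega
  rw [h1, h2, Nat.choose_symm (by omega), mul_comm]

lemma narayana_sum (p n : ℕ) (hn : 1 ≤ n) :
    ∑ b ∈ Finset.Icc 1 n, fussNarayana p n b = fussCatalan (p + 1) n := by
  have hn0 : (n : ℝ) ≠ 0 := Nat.cast_ne_zero.mpr (by omega)
  have step1 : ∀ b ∈ Finset.Icc 1 n, fussNarayana p n b
      = (1 / (n : ℝ)) * ((Nat.choose n b * Nat.choose (p * n) (b - 1) : ℕ) : ℝ) := by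
    intro b hb
    rw [Finset.mem_Icc] at hb
    have key : n * Nat.choose (n - 1) (b - 1) = Nat.choose n b * b := by
      have h := Nat.add_one_mul_choose_eq (n - 1) (b - 1)
      have e1 : n - 1 + 1 = n := by omega
      have e2 : b - 1 + 1 = b := by omega
      rw [e1, e2] at h
      exact h
    have keyR : (n : ℝ) * (Nat.choose (n - 1) (b - 1) : ℝ)
        = (Nat.choose n b : ℝ) * b := by exact_mod_cast key
    have hb0 : (b : ℝ) ≠ 0 := Nat.cast_ne_zero.mpr (by omega)
    unfold fussNarayana
    push_cast
    field_simp
    linear_combination ((Nat.choose (p * n) (b - 1) : ℝ)) * keyR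
  rw [Finset.sum_congr rfl step1, ← Finset.mul_sum, ← Nat.cast_sum, natkey p n hn]
  have key2 : ((p + 1) * n + 1) * Nat.choose ((p + 1) * n) (n - 1)
      = Nat.choose ((p + 1) * n + 1) n * n := by
    have h := Nat.add_one_mul_choose_eq ((p + 1) * n) (n - 1)
    have e2 : n - 1 + 1 = n := by omega
    rw [e2] at h
    exact h
  have key2R : (((p + 1) * n + 1 : ℕ) : ℝ) * (Nat.choose ((p + 1) * n) (n - 1) : ℝ)
      = (Nat.choose ((p + 1) * n + 1) n : ℝ) * n := by exact_mod_cast key2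
  have hpn : p * n + n = (p + 1) * n := by ring
  rw [hpn]
  unfold fussCatalan
  have hq0 : (((p : ℝ) + 1) * n + 1) ≠ 0 := by positivity
  push_cast
  push_cast at key2R
  field_simp
  linarith [key2R]

lemma pow_integrable (m : Measure ℝ) [IsFiniteMeasure m] {R : ℝ}
    (hm : ∀ᵐ x ∂m, x ∈ Set.Icc (-R) R) (n : ℕ) :
    Integrable (fun x : ℝ => x ^ n) m := by
  refine Integrable.mono' (integrable_const (R ^ n)) ((continuous_pow n).aestronglyMeasurable) ?_
  filter_upwards [hm] with x hx
  rw [Real.norm_eq_abs, abs_pow]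
  exact pow_le_pow_left₀ (abs_nonneg x) (abs_le.mpr ⟨hx.1, hx.2⟩) n

lemma poly_integrable (m : Measure ℝ) [IsFiniteMeasure m] {R : ℝ}
    (hm : ∀ᵐ x ∂m, x ∈ Set.Icc (-R) R) (q : Polynomial ℝ) :
    Integrable (fun x : ℝ => q.eval x) m := by
  have : (fun x : ℝ => q.eval x)
      = fun x => ∑ i ∈ Finset.range (q.natDegree + 1), q.coeff i * x ^ i := by
    funext x; exact Polynomial.eval_eq_sum_range x
  rw [this]
  exact integrable_finset_sum _ fun i _ => (pow_integrable m hm i).const_mul _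

lemma ext_of_moments (μ ν : Measure ℝ) [IsProbabilityMeasure μ] [IsProbabilityMeasure ν]
    {R : ℝ} (hμ : μ (Set.Icc (-R) R)ᶜ = 0) (hν : ν (Set.Icc (-R) R)ᶜ = 0)
    (h : ∀ n : ℕ, ∫ x, x ^ n ∂μ = ∫ x, x ^ n ∂ν) : μ = ν := by
  have hμae : ∀ᵐ x ∂μ, x ∈ Set.Icc (-R) R := by
    rw [ae_iff]; exact hμ
  have hνae : ∀ᵐ x ∂ν, x ∈ Set.Icc (-R) R := by
    rw [ae_iff]; exact hν
  have hpoly : ∀ q : Polynomial ℝ, ∫ x, q.eval x ∂μ = ∫ x, q.eval x ∂ν := by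
    intro q
    have e : ∀ m : Measure ℝ, (∫ x, q.eval x ∂m)
        = ∫ x, ∑ i ∈ Finset.range (q.natDegree + 1), q.coeff i * x ^ i ∂m := by
      intro m
      congr 1; funext x; exact Polynomial.eval_eq_sum_range x
    rw [e μ, e ν,
      integral_finset_sum _ fun i _ => (pow_integrable μ hμae i).const_mul _,
      integral_finset_sum _ fun i _ => (pow_integrable ν hνae i).const_mul _]
    refine Finset.sum_congr rfl fun i _ => ?_
    rw [integral_const_mul, integral_const_mul, h i]
  have key : ∀ g : ℝ →ᵇ ℝ, ∫ x, g x ∂μ = ∫ x, g x ∂ν := by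
    intro g
    by_contra hne
    set ε : ℝ := |(∫ x, g x ∂μ) - ∫ x, g x ∂ν| with hε
    have hεpos : 0 < ε := abs_pos.mpr (sub_ne_zero.mpr hne)
    obtain ⟨q, hq⟩ := exists_polynomial_near_continuousMap (-R) R
      (g.toContinuousMap.restrict (Set.Icc (-R) R)) (ε / 3) (by positivity)
    have hpt : ∀ x ∈ Set.Icc (-R) R, ‖q.eval x - g x‖ ≤ ε / 3 := by
      intro x hx
      have h1 := ContinuousMap.norm_coe_le_norm
        (q.toContinuousMapOn (Set.Icc (-R) R) - g.toContinuousMap.restrict (Set.Icc (-R) R))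
        ⟨x, hx⟩
      simp only [ContinuousMap.sub_apply, Polynomial.toContinuousMapOn_apply,
        Polynomial.toContinuousMap_apply, ContinuousMap.restrict_apply,
        ] at h1
      exact h1.trans hq.le
    have bound : ∀ (m : Measure ℝ), IsProbabilityMeasure m →
        (∀ᵐ x ∂m, x ∈ Set.Icc (-R) R) →
        |(∫ x, q.eval x ∂m) - ∫ x, g x ∂m| ≤ ε / 3 := by
      intro m hprob hmae
      rw [← integral_sub (poly_integrable m hmae q) (g.integrable m)]
      have hb := norm_integral_le_of_norm_le_const (μ := m) (C := ε / 3)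
        (f := fun x => q.eval x - g x) ?_
      · simpa [measure_univ] using hb
      · filter_upwards [hmae] with x hx
        exact hpt x hx
    have b1 := bound μ ‹_› hμae
    have b2 := bound ν ‹_› hνae
    rw [hpoly q] at b1
    have tri := abs_sub_le (∫ x, g x ∂μ) (∫ x, q.eval x ∂ν) (∫ x, g x ∂ν)
    have c1 : |(∫ x, g x ∂μ) - ∫ x, q.eval x ∂ν| ≤ ε / 3 := by
      rw [abs_sub_comm]; exact b1
    linarith
  refine ext_of_forall_lintegral_eq_of_IsFiniteMeasure fun f => ?_
  have hcont : Continuous fun x : ℝ => ((f x : NNReal) : ℝ) :=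
    NNReal.continuous_coe.comp f.continuous
  let g : ℝ →ᵇ ℝ :=
    ⟨⟨fun x => ((f x : NNReal) : ℝ), hcont⟩, by
      obtain ⟨C, hC⟩ := f.bounded
      exact ⟨C, fun x y => by
        rw [Real.dist_eq, ← NNReal.dist_eq]; exact hC x y⟩⟩
  have hint : ∀ (m : Measure ℝ) [IsProbabilityMeasure m],
      Integrable (fun x => ((f x : NNReal) : ℝ)) m := by
    intro m _
    exact g.integrable m
  rw [lintegral_coe_eq_integral _ (hint μ), lintegral_coe_eq_integral _ (hint ν)]
  congr 1
  exact key g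

/-- The semicircular law of order `p+1` is pushed forward by `x ↦ x²` onto the free
Poisson law of order `2p` with parameter `1` (compactly supported probability measures
on `ℝ` being determined by their moments). -/
theorem stmt13 (p : ℕ) (hp : 1 ≤ p) (μ ν : Measure ℝ)
    (hμprob : IsProbabilityMeasure μ) (hνprob : IsProbabilityMeasure ν)
    (hμcs : ∃ R : ℝ, μ (Set.Icc (-R) R)ᶜ = 0)
    (hνcs : ∃ R : ℝ, ν (Set.Icc (-R) R)ᶜ = 0)
    (hμeven : ∀ k : ℕ, ∫ x : ℝ, x ^ (2 * k) ∂μ = fussCatalan (p + 1) k)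
    (hμodd : ∀ k : ℕ, ∫ x : ℝ, x ^ (2 * k + 1) ∂μ = 0)
    (hν : ∀ n : ℕ, 1 ≤ n → ∫ x : ℝ, x ^ n ∂ν = ∑ b ∈ Finset.Icc 1 n, fussNarayana p n b) :
    ν = Measure.map (fun x : ℝ => x ^ 2) μ := by
  obtain ⟨Rμ, hμR⟩ := hμcs
  obtain ⟨Rν, hνR⟩ := hνcs
  set R : ℝ := max Rν (Rμ ^ 2) with hRdef
  have hR0 : 0 ≤ R := le_trans (sq_nonneg Rμ) (le_max_right _ _)
  haveI : IsProbabilityMeasure (Measure.map (fun x : ℝ => x ^ 2) μ) :=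
    Measure.isProbabilityMeasure_map ((continuous_pow 2).measurable.aemeasurable)
  have hν' : ν (Set.Icc (-R) R)ᶜ = 0 := by
    refine measure_mono_null ?_ hνR
    refine Set.compl_subset_compl.mpr (Set.Icc_subset_Icc ?_ (le_max_left _ _))
    exact neg_le_neg (le_max_left _ _)
  have hmap : (Measure.map (fun x : ℝ => x ^ 2) μ) (Set.Icc (-R) R)ᶜ = 0 := by
    rw [Measure.map_apply (continuous_pow 2).measurable measurableSet_Icc.compl]
    refine measure_mono_null ?_ hμR
    intro x hx
    intro hmem
    rw [Set.mem_Icc] at hmem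
    refine hx ?_
    rw [Set.mem_Icc]
    refine ⟨?_, ?_⟩
    · show -R ≤ x ^ 2
      linarith [sq_nonneg x]
    · show x ^ 2 ≤ R
      exact le_trans (sq_le_sq' hmem.1 hmem.2) (le_max_right _ _)
  have hmom : ∀ n : ℕ, ∫ x, x ^ n ∂ν
      = ∫ x, x ^ n ∂(Measure.map (fun x : ℝ => x ^ 2) μ) := by
    intro n
    rw [integral_map ((continuous_pow 2).measurable.aemeasurable)
      ((continuous_pow n).aestronglyMeasurable)]
    simp_rw [← pow_mul]
    rcases Nat.eq_zero_or_pos n with h0 | h1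
    · subst h0; simp
    · rw [hν n h1, hμeven n, narayana_sum p n h1]
  exact ext_of_moments ν _ hν' hmap hmom
end
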